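/- arXiv:1512.01968 — 3 statements merged into one kernel-verified Lean document; each statement's English description precedes it below -/
import Mathlib

section
/- Let g : {0,1}^n → {0,1} and let μ be a bit-wise product distribution on {0,1}^n. Then there exists a universal constant C > 0 such that the distributional query complexity of g with error 0.49 under μ satisfies QC^μ_{0.49}(g) ≤ C · (log qprt_{1/8}(g) · log log qprt_{1/8}(g))^2 (for log qprt_{1/8}(g) ≥ 2). -/
open scoped BigOperators
open scoped Classical

noncomputable section

/-! ## Probability distributions on finite types -/

/-- `p` is a probability distribution on the finite type `α`. -/
def IsDist {α : Type} [Fintype α] (p : α → ℝ) : Prop :=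
  (∀ a, 0 ≤ p a) ∧ ∑ a, p a = 1

/-- `μ` (in curried form) is a probability distribution on `X × Y`. -/
def IsDist2 {X Y : Type} [Fintype X] [Fintype Y] (μ : X → Y → ℝ) : Prop :=
  (∀ x y, 0 ≤ μ x y) ∧ ∑ x, ∑ y, μ x y = 1

/-! ## Deterministic communication protocols -/

/-- A deterministic two-party communication protocol: a finite binary tree where each
internal node is owned by Alice (`nodeA`) or Bob (`nodeB`) and is labeled by a function
of that player's input choosing one of the two children; leaves carry Boolean outputs. -/
inductive Protocol (X Y : Type) : Type
  | leaf : Bool → Protocol X Y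
  | nodeA : (X → Bool) → Protocol X Y → Protocol X Y → Protocol X Y
  | nodeB : (Y → Bool) → Protocol X Y → Protocol X Y → Protocol X Y

namespace Protocol

def eval {X Y : Type} : Protocol X Y → X → Y → Bool
  | leaf b, _, _ => b
  | nodeA g t0 t1, x, y => if g x then eval t1 x y else eval t0 x y
  | nodeB g t0 t1, x, y => if g y then eval t1 x y else eval t0 x y

/-- Depth (number of bits communicated in the worst case). -/
def depth {X Y : Type} : Protocol X Y → ℕ
  | leaf _ => 0
  | nodeA _ t0 t1 => max (depth t0) (depth t1) + 1
  | nodeB _ t0 t1 => max (depth t0) (depth t1) + 1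

/-- Number of leaves. -/
def leavesCount {X Y : Type} : Protocol X Y → ℕ
  | leaf _ => 1
  | nodeA _ t0 t1 => leavesCount t0 + leavesCount t1
  | nodeB _ t0 t1 => leavesCount t0 + leavesCount t1

/-- The sequence of bits communicated on input `(x, y)`. -/
def transcript {X Y : Type} : Protocol X Y → X → Y → List Bool
  | leaf _, _, _ => []
  | nodeA g t0 t1, x, y =>
      if g x then true :: transcript t1 x y else false :: transcript t0 x y
  | nodeB g t0 t1, x, y =>
      if g y then true :: transcript t1 x y else false :: transcript t0 x y

end Protocol

/-- Error of a deterministic protocol w.r.t. input distribution `μ`. -/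
def commErr {X Y : Type} [Fintype X] [Fintype Y]
    (μ : X → Y → ℝ) (f : X → Y → Bool) (P : Protocol X Y) : ℝ :=
  ∑ x, ∑ y, if P.eval x y ≠ f x y then μ x y else 0

/-- Distributional communication complexity `CC^μ_ε(f)`: the minimum depth of a
deterministic protocol erring with probability at most `ε` under `μ`. -/
def CCdist {X Y : Type} [Fintype X] [Fintype Y]
    (μ : X → Y → ℝ) (f : X → Y → Bool) (ε : ℝ) : ℕ :=
  sInf {d : ℕ | ∃ P : Protocol X Y, P.depth ≤ d ∧ commErr μ f P ≤ ε}

/-- The advantage `adv_μ(Π)` of a protocol w.r.t. a (not necessarily normalized) measure. -/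
def protAdv {X Y : Type} [Fintype X] [Fintype Y]
    (μ : X → Y → ℝ) (f : X → Y → Bool) (P : Protocol X Y) : ℝ :=
  ∑ x, ∑ y, if P.eval x y = f x y then μ x y else - μ x y

/-! ## Information complexity -/

/-- Probability of an event under a finite (possibly unnormalized) distribution. -/
def prOf {Ω : Type} [Fintype Ω] (p : Ω → ℝ) (q : Ω → Prop) : ℝ :=
  ∑ ω, if q ω then p ω else 0

/-- Conditional mutual information `I(A ; B | C)` (in bits) of random variables `A`, `B`, `C`
defined on a finite probability space `(Ω, p)`. -/
def condMI {Ω α β γ : Type} [Fintype Ω] (p : Ω → ℝ)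
    (A : Ω → α) (B : Ω → β) (C : Ω → γ) : ℝ :=
  ∑ ω, p ω * Real.logb 2 (
    (prOf p (fun ω' => A ω' = A ω ∧ B ω' = B ω ∧ C ω' = C ω) *
      prOf p (fun ω' => C ω' = C ω)) /
    (prOf p (fun ω' => A ω' = A ω ∧ C ω' = C ω) *
      prOf p (fun ω' => B ω' = B ω ∧ C ω' = C ω)))

/-- Internal information cost `IC^μ(Π) = I(X;T|Y) + I(Y;T|X)` of the public-coin protocol
given by a distribution `ρ` on `Fin m` together with deterministic protocols `P r`; the
transcript `T` consists of the public randomness together with the communicated bits. -/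
def infoCost {X Y : Type} [Fintype X] [Fintype Y] (μ : X → Y → ℝ)
    {m : ℕ} (ρ : Fin m → ℝ) (P : Fin m → Protocol X Y) : ℝ :=
  condMI (fun ω : X × Y × Fin m => μ ω.1 ω.2.1 * ρ ω.2.2)
      (fun ω => ω.1)
      (fun ω => (ω.2.2, (P ω.2.2).transcript ω.1 ω.2.1))
      (fun ω => ω.2.1)
  + condMI (fun ω : X × Y × Fin m => μ ω.1 ω.2.1 * ρ ω.2.2)
      (fun ω => ω.2.1)
      (fun ω => (ω.2.2, (P ω.2.2).transcript ω.1 ω.2.1))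
      (fun ω => ω.1)

/-- Error of a public-coin protocol under input distribution `μ` and coin distribution `ρ`. -/
def randErr {X Y : Type} [Fintype X] [Fintype Y] (μ : X → Y → ℝ) (f : X → Y → Bool)
    {m : ℕ} (ρ : Fin m → ℝ) (P : Fin m → Protocol X Y) : ℝ :=
  ∑ x, ∑ y, ∑ r, if (P r).eval x y ≠ f x y then μ x y * ρ r else 0

/-- `IC^μ_ε(f)`: infimum of the information cost over all public-coin protocols computing
`f` with error at most `ε` under `μ`. -/
def ICmu {X Y : Type} [Fintype X] [Fintype Y]
    (μ : X → Y → ℝ) (f : X → Y → Bool) (ε : ℝ) : ℝ :=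
  sInf { c : ℝ | ∃ (m : ℕ) (ρ : Fin m → ℝ) (P : Fin m → Protocol X Y),
    IsDist ρ ∧ randErr μ f ρ P ≤ ε ∧ c = infoCost μ ρ P }

/-- `IC_ε(f) = max_μ IC^μ_ε(f)`. -/
def IC {X Y : Type} [Fintype X] [Fintype Y] (f : X → Y → Bool) (ε : ℝ) : ℝ :=
  sSup { c : ℝ | ∃ μ : X → Y → ℝ, IsDist2 μ ∧ c = ICmu μ f ε }

/-! ## Rectangles, smooth rectangle bound and partition bound -/

/-- Total weight of rectangles containing `(x, y)`: a combinatorial rectangle is a pair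
`R = (S, T)` of finite sets, and `(x,y) ∈ R` iff `x ∈ S ∧ y ∈ T`. -/
def rcov {X Y : Type} [Fintype X] [Fintype Y]
    (w : Finset X × Finset Y → ℝ) (x : X) (y : Y) : ℝ :=
  ∑ R : Finset X × Finset Y, if x ∈ R.1 ∧ y ∈ R.2 then w R else 0

/-- `μ(R)` for a rectangle `R`. -/
def rMass {X Y : Type} [Fintype X] [Fintype Y]
    (μ : X → Y → ℝ) (R : Finset X × Finset Y) : ℝ :=
  ∑ x, ∑ y, if x ∈ R.1 ∧ y ∈ R.2 then μ x y else 0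

/-- `μ_z(R) = μ(R ∩ f⁻¹(z))` for a rectangle `R`. -/
def rMassZ {X Y : Type} [Fintype X] [Fintype Y]
    (μ : X → Y → ℝ) (f : X → Y → Bool) (z : Bool) (R : Finset X × Finset Y) : ℝ :=
  ∑ x, ∑ y, if (x ∈ R.1 ∧ y ∈ R.2) ∧ f x y = z then μ x y else 0

/-- `μ_z = μ(f⁻¹(z))`. -/
def totalZ {X Y : Type} [Fintype X] [Fintype Y]
    (μ : X → Y → ℝ) (f : X → Y → Bool) (z : Bool) : ℝ :=
  ∑ x, ∑ y, if f x y = z then μ x y else 0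

/-- `|μ|`, the total mass of a measure. -/
def totalMass {X Y : Type} [Fintype X] [Fintype Y] (μ : X → Y → ℝ) : ℝ :=
  ∑ x, ∑ y, μ x y

/-- Restriction of a measure to a rectangle. -/
def restrictRect {X Y : Type} (μ : X → Y → ℝ) (R : Finset X × Finset Y) : X → Y → ℝ :=
  fun x y => if x ∈ R.1 ∧ y ∈ R.2 then μ x y else 0

/-- Distributional smooth rectangle bound `srec^{z,μ}_{ε,δ}(f)` (LP optimal value). -/
def srecZmu {X Y : Type} [Fintype X] [Fintype Y]
    (μ : X → Y → ℝ) (f : X → Y → Bool) (z : Bool) (ε δ : ℝ) : ℝ :=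
  sInf { v : ℝ | ∃ w : Finset X × Finset Y → ℝ,
    (∀ R, 0 ≤ w R) ∧
    ((1 - ε) * totalZ μ f z ≤ ∑ x, ∑ y, if f x y = z then μ x y * rcov w x y else 0) ∧
    (∀ x y, f x y ≠ z → rcov w x y ≤ δ) ∧
    (∀ x y, rcov w x y ≤ 1) ∧
    v = ∑ R : Finset X × Finset Y, w R }

/-- `srec^μ_{ε,δ}(f) = max{srec^{0,μ}_{ε,δ}(f), srec^{1,μ}_{ε,δ}(f)}`. -/
def srecMu {X Y : Type} [Fintype X] [Fintype Y]
    (μ : X → Y → ℝ) (f : X → Y → Bool) (ε δ : ℝ) : ℝ :=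
  max (srecZmu μ f false ε δ) (srecZmu μ f true ε δ)

/-- Smooth rectangle bound `srec^z_{ε,δ}(f)` (LP optimal value). -/
def srecZ {X Y : Type} [Fintype X] [Fintype Y]
    (f : X → Y → Bool) (z : Bool) (ε δ : ℝ) : ℝ :=
  sInf { v : ℝ | ∃ w : Finset X × Finset Y → ℝ,
    (∀ R, 0 ≤ w R) ∧
    (∀ x y, f x y = z → 1 - ε ≤ rcov w x y) ∧
    (∀ x y, f x y ≠ z → rcov w x y ≤ δ) ∧
    (∀ x y, rcov w x y ≤ 1) ∧
    v = ∑ R : Finset X × Finset Y, w R }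

/-- `srec_{ε,δ}(f) = max{srec^0_{ε,δ}(f), srec^1_{ε,δ}(f)}`. -/
def srec {X Y : Type} [Fintype X] [Fintype Y] (f : X → Y → Bool) (ε δ : ℝ) : ℝ :=
  max (srecZ f false ε δ) (srecZ f true ε δ)

/-- Partition bound `prt_ε(f)` (LP optimal value). -/
def prt {X Y : Type} [Fintype X] [Fintype Y] (f : X → Y → Bool) (ε : ℝ) : ℝ :=
  sInf { v : ℝ | ∃ w : Bool → Finset X × Finset Y → ℝ,
    (∀ z R, 0 ≤ w z R) ∧
    (∀ x y, 1 - ε ≤ rcov (w (f x y)) x y) ∧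
    (∀ x y, rcov (w false) x y + rcov (w true) x y = 1) ∧
    v = ∑ R : Finset X × Finset Y, (w false R + w true R) }

/-! ### General-output versions -/

/-- Smooth rectangle bound `srec^z_{ε,δ}(f)` for general output alphabet. -/
def srecZgen {X Y Z : Type} [Fintype X] [Fintype Y]
    (f : X → Y → Z) (z : Z) (ε δ : ℝ) : ℝ :=
  sInf { v : ℝ | ∃ w : Finset X × Finset Y → ℝ,
    (∀ R, 0 ≤ w R) ∧
    (∀ x y, f x y = z → 1 - ε ≤ rcov w x y) ∧
    (∀ x y, f x y ≠ z → rcov w x y ≤ δ) ∧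
    (∀ x y, rcov w x y ≤ 1) ∧
    v = ∑ R : Finset X × Finset Y, w R }

/-- `srec_{ε,δ}(f) = max_{z ∈ Z} srec^z_{ε,δ}(f)`. -/
def srecGen {X Y Z : Type} [Fintype X] [Fintype Y] [Fintype Z]
    (f : X → Y → Z) (ε δ : ℝ) : ℝ :=
  sSup (Set.range fun z : Z => srecZgen f z ε δ)

/-- Distributional smooth rectangle bound for general output alphabet. -/
def srecZmuGen {X Y Z : Type} [Fintype X] [Fintype Y]
    (μ : X → Y → ℝ) (f : X → Y → Z) (z : Z) (ε δ : ℝ) : ℝ :=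
  sInf { v : ℝ | ∃ w : Finset X × Finset Y → ℝ,
    (∀ R, 0 ≤ w R) ∧
    ((1 - ε) * (∑ x, ∑ y, if f x y = z then μ x y else 0) ≤
      ∑ x, ∑ y, if f x y = z then μ x y * rcov w x y else 0) ∧
    (∀ x y, f x y ≠ z → rcov w x y ≤ δ) ∧
    (∀ x y, rcov w x y ≤ 1) ∧
    v = ∑ R : Finset X × Finset Y, w R }

/-- `srec^μ_{ε,δ}(f) = max_{z ∈ Z} srec^{z,μ}_{ε,δ}(f)`. -/
def srecMuGen {X Y Z : Type} [Fintype X] [Fintype Y] [Fintype Z]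
    (μ : X → Y → ℝ) (f : X → Y → Z) (ε δ : ℝ) : ℝ :=
  sSup (Set.range fun z : Z => srecZmuGen μ f z ε δ)

/-- Partition bound for general output alphabet. -/
def prtGen {X Y Z : Type} [Fintype X] [Fintype Y] [Fintype Z]
    (f : X → Y → Z) (ε : ℝ) : ℝ :=
  sInf { v : ℝ | ∃ w : Z → Finset X × Finset Y → ℝ,
    (∀ z R, 0 ≤ w z R) ∧
    (∀ x y, 1 - ε ≤ rcov (w (f x y)) x y) ∧
    (∀ x y, (∑ z : Z, rcov (w z) x y) = 1) ∧
    v = ∑ z : Z, ∑ R : Finset X × Finset Y, w z R }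

/-! ## Decision trees, subcubes and the query partition bound -/

/-- Deterministic decision trees on `n` input bits. -/
inductive DTree (n : ℕ) : Type
  | leaf : Bool → DTree n
  | node : Fin n → DTree n → DTree n → DTree n

def DTree.eval {n : ℕ} : DTree n → (Fin n → Bool) → Bool
  | .leaf b, _ => b
  | .node i t0 t1, x => if x i then DTree.eval t1 x else DTree.eval t0 x

def DTree.depth {n : ℕ} : DTree n → ℕ
  | .leaf _ => 0
  | .node _ t0 t1 => max (DTree.depth t0) (DTree.depth t1) + 1

/-- Error of a decision tree w.r.t. the input distribution `μ`. -/
def qErr {n : ℕ} (μ : (Fin n → Bool) → ℝ) (g : (Fin n → Bool) → Bool) (T : DTree n) : ℝ :=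
  ∑ x, if T.eval x ≠ g x then μ x else 0

/-- Distributional query complexity `QC^μ_ε(g)`: minimum depth of a deterministic decision
tree erring with probability at most `ε` under `μ`. -/
def QCdist {n : ℕ} (μ : (Fin n → Bool) → ℝ) (g : (Fin n → Bool) → Bool) (ε : ℝ) : ℕ :=
  sInf {d : ℕ | ∃ T : DTree n, T.depth ≤ d ∧ qErr μ g T ≤ ε}

/-- A subcube of `{0,1}ⁿ`, given by its support pattern `s ∈ {0,1,⋆}ⁿ`. -/
abbrev Subcube (n : ℕ) := Fin n → Option Bool

/-- Membership in a subcube. -/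
def memCube {n : ℕ} (A : Subcube n) (x : Fin n → Bool) : Prop :=
  ∀ i, ∀ b, A i = some b → x i = b

/-- Size of (the support of) a subcube. -/
def cubeSize {n : ℕ} (A : Subcube n) : ℕ :=
  (Finset.univ.filter fun i => (A i).isSome).card

/-- Total weight of subcubes containing `x`. -/
def cubeCov {n : ℕ} (w : Subcube n → ℝ) (x : Fin n → Bool) : ℝ :=
  ∑ A : Subcube n, if memCube A x then w A else 0

/-- Query partition bound `qprt_ε(g)` (LP optimal value). -/
def qprt {n : ℕ} (g : (Fin n → Bool) → Bool) (ε : ℝ) : ℝ :=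
  sInf { v : ℝ | ∃ w : Bool → Subcube n → ℝ,
    (∀ z A, 0 ≤ w z A) ∧
    (∀ x, 1 - ε ≤ cubeCov (w (g x)) x) ∧
    (∀ x, cubeCov (w false) x + cubeCov (w true) x = 1) ∧
    v = ∑ A : Subcube n, (w false A + w true A) * 2 ^ cubeSize A }

/-- The bit-wise product distribution on `{0,1}ⁿ` with `p_i(1) = p i`, `p_i(0) = 1 - p i`. -/
def bitProd {n : ℕ} (p : Fin n → ℝ) : (Fin n → Bool) → ℝ :=
  fun x => ∏ i, if x i then p i else 1 - p i

/-- `μ(A)` for a subcube (or any set given by a membership predicate). -/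
def cubeMass {n : ℕ} (μ : (Fin n → Bool) → ℝ) (A : Subcube n) : ℝ :=
  ∑ x, if memCube A x then μ x else 0

/-- `μ_z(A) = μ(A ∩ g⁻¹(z))` for a subcube `A`. -/
def cubeMassZ {n : ℕ} (μ : (Fin n → Bool) → ℝ) (g : (Fin n → Bool) → Bool)
    (z : Bool) (A : Subcube n) : ℝ :=
  ∑ x, if memCube A x ∧ g x = z then μ x else 0

/-- `μ_z = μ(g⁻¹(z))`. -/
def qTotalZ {n : ℕ} (μ : (Fin n → Bool) → ℝ) (g : (Fin n → Bool) → Bool) (z : Bool) : ℝ :=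
  ∑ x, if g x = z then μ x else 0

/-- Mass of a finite set of pairs under the product measure `μA ⊗ μB`. -/
def pairMass {X Y : Type} (μA : X → ℝ) (μB : Y → ℝ) (A : Finset (X × Y)) : ℝ :=
  ∑ q ∈ A, μA q.1 * μB q.2

end


open scoped BigOperators
open scoped Classical

noncomputable section AuxQP

namespace QP

variable {n : ℕ}

/-- Per-bit factor of the product distribution. -/
def bp (p : Fin n → ℝ) (i : Fin n) (b : Bool) : ℝ := if b then p i else 1 - p i

/-- Restricted (unnormalized) measure at state `σ`. -/
def nu (p : Fin n → ℝ) (σ : Subcube n) (x : Fin n → Bool) : ℝ :=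
  if memCube σ x then bitProd p x else 0

def mass (p : Fin n → ℝ) (σ : Subcube n) : ℝ := ∑ x, nu p σ x

def alpha (p : Fin n → ℝ) (σ : Subcube n) (A : Subcube n) : ℝ :=
  ∑ x, if memCube A x then nu p σ x else 0

/-- Truncated weights: only cubes of size at most `k`. -/
def hatw (k : ℕ) (w : Bool → Subcube n → ℝ) (z : Bool) (A : Subcube n) : ℝ :=
  if cubeSize A ≤ k then w z A else 0

/-- Cover by small cubes. -/
def covS (k : ℕ) (w : Bool → Subcube n → ℝ) (z : Bool) (x : Fin n → Bool) : ℝ :=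
  cubeCov (hatw k w z) x

/-- Integral of the small cover against `ν_σ`. -/
def SS (k : ℕ) (p : Fin n → ℝ) (w : Bool → Subcube n → ℝ) (z : Bool) (σ : Subcube n) : ℝ :=
  ∑ x, nu p σ x * covS k w z x

/-- Mass of unresolved small cubes through coordinate `j`. -/
def MM (k : ℕ) (p : Fin n → ℝ) (w : Bool → Subcube n → ℝ) (j : Fin n) (σ : Subcube n) : ℝ :=
  if σ j = none then
    ∑ A : Subcube n, (if (A j).isSome then (hatw k w false A + hatw k w true A) * alpha p σ A else 0)
  else 0

def Phi (k : ℕ) (p : Fin n → ℝ) (w : Bool → Subcube n → ℝ) (σ : Subcube n) : ℝ :=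
  ∑ j, MM k p w j σ

/-- Balanced state. -/
def bal (k : ℕ) (p : Fin n → ℝ) (w : Bool → Subcube n → ℝ) (σ : Subcube n) : Prop :=
  (2/5 : ℝ) * mass p σ ≤ SS k p w false σ ∧ (2/5 : ℝ) * mass p σ ≤ SS k p w true σ

/-- Output at a leaf. -/
def outz (k : ℕ) (p : Fin n → ℝ) (w : Bool → Subcube n → ℝ) (σ : Subcube n) : Bool :=
  if SS k p w false σ ≤ SS k p w true σ then true else false

def freeSet (σ : Subcube n) : Finset (Fin n) :=
  Finset.univ.filter (fun j => σ j = none)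

def internal (k : ℕ) (p : Fin n → ℝ) (w : Bool → Subcube n → ℝ) (σ : Subcube n) : Prop :=
  bal k p w σ ∧ (freeSet σ).Nonempty

/-- The queried coordinate: a free coordinate maximizing `MM`. -/
def pick (k : ℕ) (p : Fin n → ℝ) (w : Bool → Subcube n → ℝ) (σ : Subcube n)
    (h : (freeSet σ).Nonempty) : Fin n :=
  Classical.choose (Finset.exists_max_image (freeSet σ) (fun j => MM k p w j σ) h)

/-- The decision tree. -/
def T (k : ℕ) (p : Fin n → ℝ) (w : Bool → Subcube n → ℝ) : ℕ → Subcube n → DTree n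
  | 0, σ => .leaf (outz k p w σ)
  | d+1, σ =>
    if h : internal k p w σ then
      .node (pick k p w σ h.2)
        (T k p w d (Function.update σ (pick k p w σ h.2) (some false)))
        (T k p w d (Function.update σ (pick k p w σ h.2) (some true)))
    else .leaf (outz k p w σ)

/-- Error mass of the constructed tree. -/
def errT (k : ℕ) (p : Fin n → ℝ) (w : Bool → Subcube n → ℝ)
    (g : (Fin n → Bool) → Bool) (d : ℕ) (σ : Subcube n) : ℝ :=
  ∑ x, if (T k p w d σ).eval x ≠ g x then nu p σ x else 0

/-- Mass of balanced depth-`d` survivors. -/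
def cap (k : ℕ) (p : Fin n → ℝ) (w : Bool → Subcube n → ℝ) : ℕ → Subcube n → ℝ
  | 0, σ => if internal k p w σ then mass p σ else 0
  | d+1, σ =>
    if h : internal k p w σ then
      cap k p w d (Function.update σ (pick k p w σ h.2) (some false)) +
      cap k p w d (Function.update σ (pick k p w σ h.2) (some true))
    else 0

/-- Mass-weighted expected number of queries. -/
def QQ (k : ℕ) (p : Fin n → ℝ) (w : Bool → Subcube n → ℝ) : ℕ → Subcube n → ℝ
  | 0, _ => 0
  | d+1, σ =>
    if h : internal k p w σ then
      mass p σ +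
      (QQ k p w d (Function.update σ (pick k p w σ h.2) (some false)) +
       QQ k p w d (Function.update σ (pick k p w σ h.2) (some true)))
    else 0

end QP

end AuxQP


open scoped BigOperators
open scoped Classical

noncomputable section L1QP

namespace QP

variable {n : ℕ}

/-- per-coordinate factor of `ν_σ`. -/
def hcoord (p : Fin n → ℝ) (σ : Subcube n) (i : Fin n) (b : Bool) : ℝ :=
  match σ i with
  | none => bp p i b
  | some c => if b = c then bp p i b else 0

def coordFactor (p : Fin n → ℝ) (σ : Subcube n) (i : Fin n) : ℝ :=
  match σ i with
  | none => 1
  | some c => bp p i c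

lemma bitProd_eq_prod_bp (p : Fin n → ℝ) (x : Fin n → Bool) :
    bitProd p x = ∏ i, bp p i (x i) := by
  unfold bitProd bp; rfl

lemma nu_eq_prod (p : Fin n → ℝ) (σ : Subcube n) (x : Fin n → Bool) :
    nu p σ x = ∏ i, hcoord p σ i (x i) := by
  unfold nu
  by_cases h : memCube σ x
  · rw [if_pos h, bitProd_eq_prod_bp]
    refine Finset.prod_congr rfl (fun i _ => ?_)
    unfold hcoord
    cases hσ : σ i with
    | none => simp [hσ]
    | some c =>
      have := h i c hσ
      simp [hσ, this]
  · rw [if_neg h]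
    unfold memCube at h
    push_neg at h
    obtain ⟨i, c, hic, hx⟩ := h
    refine (Finset.prod_eq_zero (Finset.mem_univ i) ?_).symm
    unfold hcoord
    simp [hic, hx]

lemma sum_hcoord (p : Fin n → ℝ) (σ : Subcube n) (i : Fin n) :
    (∑ b : Bool, hcoord p σ i b) = coordFactor p σ i := by
  unfold hcoord coordFactor
  cases hσ : σ i with
  | none => simp [bp]
  | some c => cases c <;> simp [bp]

lemma mass_eq_prod (p : Fin n → ℝ) (σ : Subcube n) :
    mass p σ = ∏ i, coordFactor p σ i := by
  unfold mass
  have h1 : ∀ x : Fin n → Bool, nu p σ x = ∏ i, hcoord p σ i (x i) :=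
    nu_eq_prod p σ
  calc ∑ x : Fin n → Bool, nu p σ x
      = ∑ x : Fin n → Bool, ∏ i, hcoord p σ i (x i) := by
        exact Finset.sum_congr rfl (fun x _ => h1 x)
    _ = ∏ i, ∑ b : Bool, hcoord p σ i b := by
        rw [Finset.prod_univ_sum]
        rw [← Fintype.piFinset_univ]
    _ = ∏ i, coordFactor p σ i := by
        exact Finset.prod_congr rfl (fun i _ => sum_hcoord p σ i)

/-- Compatibility of a state with a cube. -/
def compat (σ A : Subcube n) : Prop :=
  ∀ i b c, σ i = some b → A i = some c → b = c

/-- Merge a state with a cube (state takes precedence). -/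
def mrg (σ A : Subcube n) : Subcube n :=
  fun i => match σ i with
  | some b => some b
  | none => A i

lemma mem_mrg {σ A : Subcube n} (hc : compat σ A) (x : Fin n → Bool) :
    memCube (mrg σ A) x ↔ memCube σ x ∧ memCube A x := by
  constructor
  · intro h
    constructor
    · intro i b hσ
      apply h i b
      unfold mrg; rw [hσ]
    · intro i c hA
      cases hσ : σ i with
      | none =>
        apply h i c
        unfold mrg; rw [hσ]; exact hA
      | some b =>
        have hbc : b = c := hc i b c hσ hA
        have := h i b (by unfold mrg; rw [hσ])
        rw [← hbc]; exact this
  · rintro ⟨h1, h2⟩ i b hm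
    unfold mrg at hm
    cases hσ : σ i with
    | none => rw [hσ] at hm; exact h2 i b hm
    | some b' =>
      rw [hσ] at hm
      have : b' = b := by injection hm
      exact this ▸ h1 i b' hσ

lemma alpha_eq_mass_mrg {σ A : Subcube n} (p : Fin n → ℝ) (hc : compat σ A) :
    alpha p σ A = mass p (mrg σ A) := by
  unfold alpha mass nu
  refine Finset.sum_congr rfl (fun x _ => ?_)
  by_cases hA : memCube A x <;> by_cases hσ : memCube σ x <;>
    simp [hA, hσ, mem_mrg hc x]

lemma alpha_of_not_compat {σ A : Subcube n} (p : Fin n → ℝ) (hc : ¬ compat σ A) :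
    alpha p σ A = 0 := by
  unfold compat at hc
  push_neg at hc
  obtain ⟨i, b, c, hσ, hA, hbc⟩ := hc
  unfold alpha nu
  refine Finset.sum_eq_zero (fun x _ => ?_)
  by_cases hmA : memCube A x
  · by_cases hmσ : memCube σ x
    · exact absurd ((hmσ i b hσ).symm.trans (hmA i c hA)) hbc
    · simp [hmA, hmσ]
  · simp [hmA]

end QP

end L1QP


open scoped BigOperators
open scoped Classical

noncomputable section L2QP

namespace QP

variable {n : ℕ}

def beta (p : Fin n → ℝ) (σ A B : Subcube n) : ℝ :=
  ∑ x, if memCube A x ∧ memCube B x then nu p σ x else 0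

def collide (σ A B : Subcube n) : Prop :=
  ∃ j, σ j = none ∧ (A j).isSome ∧ (B j).isSome

lemma compat_mrg {σ A B : Subcube n} (hB : compat σ B) (hnc : ¬ collide σ A B) :
    compat (mrg σ A) B := by
  intro i b c hm hBi
  unfold mrg at hm
  cases hσ : σ i with
  | some b' =>
    rw [hσ] at hm
    have hb : b' = b := by injection hm
    exact hb ▸ hB i b' c hσ hBi
  | none =>
    rw [hσ] at hm
    have hm' : A i = some b := hm
    exfalso
    exact hnc ⟨i, hσ, by rw [hm']; rfl, by rw [hBi]; rfl⟩

lemma beta_eq_mass {σ A B : Subcube n} (p : Fin n → ℝ)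
    (hA : compat σ A) (hB : compat σ B) (hnc : ¬ collide σ A B) :
    beta p σ A B = mass p (mrg (mrg σ A) B) := by
  have hAB : compat (mrg σ A) B := compat_mrg hB hnc
  unfold beta mass
  refine Finset.sum_congr rfl (fun x _ => ?_)
  have h1 : memCube (mrg (mrg σ A) B) x ↔ (memCube σ x ∧ memCube A x) ∧ memCube B x := by
    rw [mem_mrg hAB x, mem_mrg hA x]
  unfold nu
  by_cases hma : memCube A x <;> by_cases hmb : memCube B x <;>
    by_cases hms : memCube σ x <;> simp [hma, hmb, hms, h1]

lemma factor_coord {σ A B : Subcube n} (p : Fin n → ℝ) (hnc : ¬ collide σ A B) (i : Fin n) :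
    coordFactor p σ i * coordFactor p (mrg (mrg σ A) B) i
      = coordFactor p (mrg σ A) i * coordFactor p (mrg σ B) i := by
  unfold coordFactor mrg
  cases hσ : σ i with
  | some b => simp [hσ]
  | none =>
    have hi : ¬ ((A i).isSome ∧ (B i).isSome) := fun hh => hnc ⟨i, hσ, hh.1, hh.2⟩
    cases hA : A i with
    | some a =>
      have hBi : B i = none := by
        cases hB : B i with
        | none => rfl
        | some c => exact absurd ⟨by rw [hA]; rfl, by rw [hB]; rfl⟩ hi
      simp [hσ, hA, hBi]
    | none =>
      cases hB : B i with
      | none => simp [hσ, hA, hB]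
      | some c => simp [hσ, hA, hB]

lemma factorization {σ A B : Subcube n} (p : Fin n → ℝ)
    (hA : compat σ A) (hB : compat σ B) (hnc : ¬ collide σ A B) :
    mass p σ * beta p σ A B = alpha p σ A * alpha p σ B := by
  rw [beta_eq_mass p hA hB hnc, alpha_eq_mass_mrg p hA, alpha_eq_mass_mrg p hB,
    mass_eq_prod, mass_eq_prod, mass_eq_prod, mass_eq_prod,
    ← Finset.prod_mul_distrib, ← Finset.prod_mul_distrib]
  exact Finset.prod_congr rfl (fun i _ => factor_coord p hnc i)

/-! ### Nonnegativity -/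

lemma bitProd_nonneg {p : Fin n → ℝ} (hp : ∀ i, 0 ≤ p i ∧ p i ≤ 1) (x : Fin n → Bool) :
    0 ≤ bitProd p x := by
  unfold bitProd
  refine Finset.prod_nonneg (fun i _ => ?_)
  rcases hp i with ⟨h0, h1⟩
  cases hx : x i <;> simp [hx] <;> linarith

lemma nu_nonneg {p : Fin n → ℝ} (hp : ∀ i, 0 ≤ p i ∧ p i ≤ 1) (σ : Subcube n)
    (x : Fin n → Bool) : 0 ≤ nu p σ x := by
  unfold nu
  by_cases h : memCube σ x <;> simp [h, bitProd_nonneg hp]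

lemma mass_nonneg {p : Fin n → ℝ} (hp : ∀ i, 0 ≤ p i ∧ p i ≤ 1) (σ : Subcube n) :
    0 ≤ mass p σ :=
  Finset.sum_nonneg (fun x _ => nu_nonneg hp σ x)

lemma alpha_nonneg {p : Fin n → ℝ} (hp : ∀ i, 0 ≤ p i ∧ p i ≤ 1) (σ A : Subcube n) :
    0 ≤ alpha p σ A := by
  refine Finset.sum_nonneg (fun x _ => ?_)
  by_cases h : memCube A x <;> simp [h, nu_nonneg hp]

lemma beta_nonneg {p : Fin n → ℝ} (hp : ∀ i, 0 ≤ p i ∧ p i ≤ 1) (σ A B : Subcube n) :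
    0 ≤ beta p σ A B := by
  refine Finset.sum_nonneg (fun x _ => ?_)
  by_cases h : memCube A x ∧ memCube B x <;> simp [h, nu_nonneg hp]

lemma hatw_nonneg {k : ℕ} {w : Bool → Subcube n → ℝ} (hw : ∀ z A, 0 ≤ w z A)
    (z : Bool) (A : Subcube n) : 0 ≤ hatw k w z A := by
  unfold hatw
  by_cases h : cubeSize A ≤ k <;> simp [h, hw]

lemma covS_nonneg {k : ℕ} {w : Bool → Subcube n → ℝ} (hw : ∀ z A, 0 ≤ w z A)
    (z : Bool) (x : Fin n → Bool) : 0 ≤ covS k w z x := by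
  unfold covS cubeCov
  refine Finset.sum_nonneg (fun A _ => ?_)
  by_cases h : memCube A x <;> simp [h, hatw_nonneg hw]

lemma SS_nonneg {k : ℕ} {p : Fin n → ℝ} {w : Bool → Subcube n → ℝ}
    (hp : ∀ i, 0 ≤ p i ∧ p i ≤ 1) (hw : ∀ z A, 0 ≤ w z A) (z : Bool) (σ : Subcube n) :
    0 ≤ SS k p w z σ :=
  Finset.sum_nonneg (fun x _ => mul_nonneg (nu_nonneg hp σ x) (covS_nonneg hw z x))

lemma MM_nonneg {k : ℕ} {p : Fin n → ℝ} {w : Bool → Subcube n → ℝ}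
    (hp : ∀ i, 0 ≤ p i ∧ p i ≤ 1) (hw : ∀ z A, 0 ≤ w z A) (j : Fin n) (σ : Subcube n) :
    0 ≤ MM k p w j σ := by
  unfold MM
  by_cases h : σ j = none
  · rw [if_pos h]
    refine Finset.sum_nonneg (fun A _ => ?_)
    by_cases h2 : (A j).isSome
    · rw [if_pos h2]
      have := add_nonneg (hatw_nonneg (k := k) hw false A) (hatw_nonneg (k := k) hw true A)
      exact mul_nonneg this (alpha_nonneg hp σ A)
    · simp [h2]
  · simp [h]

lemma Phi_nonneg {k : ℕ} {p : Fin n → ℝ} {w : Bool → Subcube n → ℝ}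
    (hp : ∀ i, 0 ≤ p i ∧ p i ≤ 1) (hw : ∀ z A, 0 ≤ w z A) (σ : Subcube n) :
    0 ≤ Phi k p w σ :=
  Finset.sum_nonneg (fun j _ => MM_nonneg hp hw j σ)

end QP

end L2QP


open scoped BigOperators
open scoped Classical

noncomputable section L3QP

namespace QP

variable {n : ℕ}

lemma memCube_update {σ : Subcube n} {j : Fin n} (hj : σ j = none)
    (b : Bool) (x : Fin n → Bool) :
    memCube (Function.update σ j (some b)) x ↔ memCube σ x ∧ x j = b := by
  constructor
  · intro h
    refine ⟨fun i c hσi => ?_, h j b (by rw [Function.update_self])⟩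
    by_cases hij : i = j
    · subst hij; rw [hj] at hσi; cases hσi
    · exact h i c (by rw [Function.update_of_ne hij]; exact hσi)
  · rintro ⟨h1, h2⟩ i c hic
    by_cases hij : i = j
    · subst hij
      rw [Function.update_self] at hic
      have : b = c := by injection hic
      exact this ▸ h2
    · rw [Function.update_of_ne hij] at hic
      exact h1 i c hic

lemma nu_split {σ : Subcube n} {j : Fin n} (hj : σ j = none)
    (p : Fin n → ℝ) (x : Fin n → Bool) :
    nu p σ x = nu p (Function.update σ j (some false)) x
      + nu p (Function.update σ j (some true)) x := by
  unfold nu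
  by_cases hm : memCube σ x
  · cases hx : x j <;>
      simp [memCube_update hj, hm, hx]
  · simp [memCube_update hj, hm]

lemma mass_split {σ : Subcube n} {j : Fin n} (hj : σ j = none) (p : Fin n → ℝ) :
    mass p σ = mass p (Function.update σ j (some false))
      + mass p (Function.update σ j (some true)) := by
  unfold mass
  rw [← Finset.sum_add_distrib]
  exact Finset.sum_congr rfl (fun x _ => nu_split hj p x)

lemma alpha_split {σ : Subcube n} {j : Fin n} (hj : σ j = none) (p : Fin n → ℝ)
    (A : Subcube n) :
    alpha p σ A = alpha p (Function.update σ j (some false)) A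
      + alpha p (Function.update σ j (some true)) A := by
  unfold alpha
  rw [← Finset.sum_add_distrib]
  refine Finset.sum_congr rfl (fun x _ => ?_)
  by_cases hm : memCube A x <;> simp [hm, nu_split hj p x]

lemma SS_split {σ : Subcube n} {j : Fin n} (hj : σ j = none) (k : ℕ)
    (p : Fin n → ℝ) (w : Bool → Subcube n → ℝ) (z : Bool) :
    SS k p w z σ = SS k p w z (Function.update σ j (some false))
      + SS k p w z (Function.update σ j (some true)) := by
  unfold SS
  rw [← Finset.sum_add_distrib]
  refine Finset.sum_congr rfl (fun x _ => ?_)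
  rw [nu_split hj p x]; ring

lemma MM_split {σ : Subcube n} {j j' : Fin n} (hj : σ j = none) (hne : j' ≠ j)
    (k : ℕ) (p : Fin n → ℝ) (w : Bool → Subcube n → ℝ) :
    MM k p w j' σ = MM k p w j' (Function.update σ j (some false))
      + MM k p w j' (Function.update σ j (some true)) := by
  unfold MM
  have h1 : Function.update σ j (some false) j' = σ j' := Function.update_of_ne hne _ _
  have h2 : Function.update σ j (some true) j' = σ j' := Function.update_of_ne hne _ _
  rw [h1, h2]
  by_cases hc : σ j' = none
  · rw [if_pos hc, if_pos hc, if_pos hc, ← Finset.sum_add_distrib]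
    refine Finset.sum_congr rfl (fun A _ => ?_)
    by_cases hA : (A j').isSome
    · simp only [if_pos hA]
      rw [alpha_split hj p A]; ring
    · simp [hA]
  · simp [hc]

lemma MM_self_zero {σ : Subcube n} {j : Fin n} (b : Bool)
    (k : ℕ) (p : Fin n → ℝ) (w : Bool → Subcube n → ℝ) :
    MM k p w j (Function.update σ j (some b)) = 0 := by
  unfold MM
  rw [if_neg (by rw [Function.update_self]; simp)]

lemma Phi_split {σ : Subcube n} {j : Fin n} (hj : σ j = none)
    (k : ℕ) (p : Fin n → ℝ) (w : Bool → Subcube n → ℝ) :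
    Phi k p w σ = MM k p w j σ
      + (Phi k p w (Function.update σ j (some false))
        + Phi k p w (Function.update σ j (some true))) := by
  unfold Phi
  have key : ∀ b : Bool,
      (∑ j', MM k p w j' (Function.update σ j (some b)))
        = ∑ j' ∈ Finset.univ.erase j, MM k p w j' (Function.update σ j (some b)) := by
    intro b
    rw [← Finset.add_sum_erase _ _ (Finset.mem_univ j), MM_self_zero, zero_add]
  rw [key false, key true,
    ← Finset.add_sum_erase _ (fun j' => MM k p w j' σ) (Finset.mem_univ j),
    ← Finset.sum_add_distrib]
  congr 1
  refine Finset.sum_congr rfl (fun j' hj' => ?_)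
  exact MM_split hj (Finset.ne_of_mem_erase hj') k p w

end QP

end L3QP


open scoped BigOperators
open scoped Classical

noncomputable section L4QP

namespace QP

variable {n : ℕ}

/-- Total weight of big cubes. -/
def Big (k : ℕ) (w : Bool → Subcube n → ℝ) : ℝ :=
  ∑ A : Subcube n, if ¬ (cubeSize A ≤ k) then w false A + w true A else 0

lemma cubeCov_nonneg {w : Bool → Subcube n → ℝ} (hw : ∀ z A, 0 ≤ w z A)
    (z : Bool) (x : Fin n → Bool) : 0 ≤ cubeCov (w z) x := by
  unfold cubeCov
  refine Finset.sum_nonneg (fun A _ => ?_)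
  by_cases h : memCube A x <;> simp [h, hw]

lemma cubeCov_le_one {w : Bool → Subcube n → ℝ} (hw : ∀ z A, 0 ≤ w z A)
    (hsum : ∀ x, cubeCov (w false) x + cubeCov (w true) x = 1)
    (z : Bool) (x : Fin n → Bool) : cubeCov (w z) x ≤ 1 := by
  have h := hsum x
  cases z
  · have := cubeCov_nonneg hw true x; linarith
  · have := cubeCov_nonneg hw false x; linarith

lemma covS_le_cubeCov {k : ℕ} {w : Bool → Subcube n → ℝ} (hw : ∀ z A, 0 ≤ w z A)
    (z : Bool) (x : Fin n → Bool) : covS k w z x ≤ cubeCov (w z) x := by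
  simp only [covS, cubeCov, hatw]
  refine Finset.sum_le_sum (fun A _ => ?_)
  by_cases h : memCube A x <;> by_cases h2 : cubeSize A ≤ k <;> simp [h, h2, hw]

lemma covS_le_one {k : ℕ} {w : Bool → Subcube n → ℝ} (hw : ∀ z A, 0 ≤ w z A)
    (hsum : ∀ x, cubeCov (w false) x + cubeCov (w true) x = 1)
    (z : Bool) (x : Fin n → Bool) : covS k w z x ≤ 1 :=
  le_trans (covS_le_cubeCov hw z x) (cubeCov_le_one hw hsum z x)

lemma cubeCov_sub_covS_le_Big {k : ℕ} {w : Bool → Subcube n → ℝ} (hw : ∀ z A, 0 ≤ w z A)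
    (x : Fin n → Bool) :
    (cubeCov (w false) x - covS k w false x) + (cubeCov (w true) x - covS k w true x)
      ≤ Big k w := by
  have hz : ∀ z : Bool, cubeCov (w z) x - covS k w z x
      = ∑ A : Subcube n, (if memCube A x ∧ ¬ (cubeSize A ≤ k) then w z A else 0) := by
    intro z
    simp only [covS, cubeCov, hatw]
    rw [← Finset.sum_sub_distrib]
    refine Finset.sum_congr rfl (fun A _ => ?_)
    by_cases h : memCube A x <;> by_cases h2 : cubeSize A ≤ k <;> simp [h, h2]
  rw [hz false, hz true, ← Finset.sum_add_distrib]
  unfold Big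
  refine Finset.sum_le_sum (fun A _ => ?_)
  by_cases h : memCube A x <;> by_cases h2 : cubeSize A ≤ k <;>
    simp [h, h2] <;>
    exact add_nonneg (hw false A) (hw true A)

/-- Big cube weight bound from the LP value. -/
lemma Big_le {k : ℕ} {w : Bool → Subcube n → ℝ} {v : ℝ} (hw : ∀ z A, 0 ≤ w z A)
    (hval : v = ∑ A : Subcube n, (w false A + w true A) * 2 ^ cubeSize A)
    (hk : 128 * v ≤ (2:ℝ) ^ (k+1)) :
    Big k w ≤ 1 / 128 := by
  have h1 : Big k w * 2 ^ (k+1) ≤ v := by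
    rw [hval]
    unfold Big
    rw [Finset.sum_mul]
    refine Finset.sum_le_sum (fun A _ => ?_)
    by_cases h2 : cubeSize A ≤ k
    · rw [if_neg (not_not_intro h2), zero_mul]
      exact mul_nonneg (add_nonneg (hw false A) (hw true A)) (by positivity)
    · simp only [if_pos h2]
      have hle : (2:ℝ) ^ (k+1) ≤ 2 ^ cubeSize A := by
        apply pow_le_pow_right₀ (by norm_num : (1:ℝ) ≤ 2)
        omega
      have hWA : 0 ≤ w false A + w true A := add_nonneg (hw false A) (hw true A)
      nlinarith
  have h2 : (0:ℝ) < (2:ℝ) ^ (k+1) := by positivity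
  have h3 : (128 * Big k w) * 2^(k+1) ≤ 1 * 2^(k+1) := by nlinarith
  have h4 : 128 * Big k w ≤ 1 := le_of_mul_le_mul_right (by linarith) h2
  linarith

end QP

end L4QP


open scoped BigOperators
open scoped Classical

noncomputable section L5QP

namespace QP

variable {n : ℕ}

/-- Pointwise product bound for the small covers. -/
lemma covS_mul_le {k : ℕ} {w : Bool → Subcube n → ℝ} {g : (Fin n → Bool) → Bool}
    (hw : ∀ z A, 0 ≤ w z A)
    (hcov : ∀ x, 1 - 1/8 ≤ cubeCov (w (g x)) x)
    (hsum : ∀ x, cubeCov (w false) x + cubeCov (w true) x = 1)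
    (x : Fin n → Bool) :
    covS k w false x * covS k w true x ≤ 1/8 := by
  have h0 := covS_nonneg (k := k) hw false x
  have h1 := covS_nonneg (k := k) hw true x
  have hle0 := covS_le_one (k := k) hw hsum false x
  have hle1 := covS_le_one (k := k) hw hsum true x
  have hc := hcov x
  have hs := hsum x
  cases hg : g x
  · rw [hg] at hc
    have : covS k w true x ≤ 1/8 := by
      have := covS_le_cubeCov (k := k) hw true x
      linarith
    nlinarith
  · rw [hg] at hc
    have : covS k w false x ≤ 1/8 := by
      have := covS_le_cubeCov (k := k) hw false x
      linarith
    nlinarith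

lemma sum_ite_mul_const {α : Type*} [Fintype α] (c : ℝ) (P : α → Prop) (f : α → ℝ) :
    ∑ a, (if P a then c * f a else 0) = c * ∑ a, (if P a then f a else 0) := by
  rw [Finset.mul_sum]
  refine Finset.sum_congr rfl (fun a _ => ?_)
  by_cases h : P a <;> simp [h]

/-- `SS` as a cube sum. -/
lemma SS_eq_sum_alpha (k : ℕ) (p : Fin n → ℝ) (w : Bool → Subcube n → ℝ)
    (z : Bool) (σ : Subcube n) :
    SS k p w z σ = ∑ A : Subcube n, hatw k w z A * alpha p σ A := by
  unfold SS alpha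
  simp only [covS, cubeCov]
  calc ∑ x : Fin n → Bool, nu p σ x * ∑ A : Subcube n, (if memCube A x then hatw k w z A else 0)
      = ∑ x : Fin n → Bool, ∑ A : Subcube n, (if memCube A x then hatw k w z A * nu p σ x else 0) := by
        refine Finset.sum_congr rfl (fun x _ => ?_)
        rw [Finset.mul_sum]
        refine Finset.sum_congr rfl (fun A _ => ?_)
        by_cases h : memCube A x <;> simp [h, mul_comm]
    _ = ∑ A : Subcube n, ∑ x : Fin n → Bool, (if memCube A x then hatw k w z A * nu p σ x else 0) :=
        Finset.sum_comm
    _ = ∑ A : Subcube n, hatw k w z A * ∑ x : Fin n → Bool, (if memCube A x then nu p σ x else 0) := by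
        refine Finset.sum_congr rfl (fun A _ => ?_)
        exact sum_ite_mul_const _ _ _

/-- Expansion of the second moment integral. -/
lemma prod_expand (k : ℕ) (p : Fin n → ℝ) (w : Bool → Subcube n → ℝ) (σ : Subcube n) :
    (∑ x, nu p σ x * (covS k w false x * covS k w true x))
      = ∑ A : Subcube n, ∑ B : Subcube n,
          hatw k w false A * hatw k w true B * beta p σ A B := by
  have e1 : ∀ x, nu p σ x * (covS k w false x * covS k w true x)
      = ∑ A : Subcube n, ∑ B : Subcube n,
          (if memCube A x ∧ memCube B x
            then hatw k w false A * hatw k w true B * nu p σ x else 0) := by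
    intro x
    simp only [covS, cubeCov]
    rw [Finset.sum_mul_sum, Finset.mul_sum]
    refine Finset.sum_congr rfl (fun A _ => ?_)
    rw [Finset.mul_sum]
    refine Finset.sum_congr rfl (fun B _ => ?_)
    by_cases hA : memCube A x <;> by_cases hB : memCube B x <;>
      simp [hA, hB] <;> ring
  calc (∑ x, nu p σ x * (covS k w false x * covS k w true x))
      = ∑ x, ∑ A : Subcube n, ∑ B : Subcube n,
          (if memCube A x ∧ memCube B x
            then hatw k w false A * hatw k w true B * nu p σ x else 0) :=
        Finset.sum_congr rfl (fun x _ => e1 x)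
    _ = ∑ A : Subcube n, ∑ x, ∑ B : Subcube n,
          (if memCube A x ∧ memCube B x
            then hatw k w false A * hatw k w true B * nu p σ x else 0) := Finset.sum_comm
    _ = ∑ A : Subcube n, ∑ B : Subcube n, ∑ x,
          (if memCube A x ∧ memCube B x
            then hatw k w false A * hatw k w true B * nu p σ x else 0) :=
        Finset.sum_congr rfl (fun A _ => Finset.sum_comm)
    _ = ∑ A : Subcube n, ∑ B : Subcube n,
          hatw k w false A * hatw k w true B * beta p σ A B := by
        refine Finset.sum_congr rfl (fun A _ => Finset.sum_congr rfl (fun B _ => ?_))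
        unfold beta
        rw [Finset.mul_sum]
        refine Finset.sum_congr rfl (fun x _ => ?_)
        by_cases h : memCube A x ∧ memCube B x <;> simp [h]

/-- Per-pair comparison. -/
lemma pair_bound {k : ℕ} {p : Fin n → ℝ} {w : Bool → Subcube n → ℝ}
    (hp : ∀ i, 0 ≤ p i ∧ p i ≤ 1) (hw : ∀ z A, 0 ≤ w z A) (σ A B : Subcube n) :
    hatw k w false A * hatw k w true B * (alpha p σ A * alpha p σ B)
        - hatw k w false A * hatw k w true B * (mass p σ * beta p σ A B)
      ≤ (if collide σ A B then
          (hatw k w false A + hatw k w true A) * alpha p σ A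
            * ((hatw k w false B + hatw k w true B) * alpha p σ B) else 0) := by
  have hwa := hatw_nonneg (k := k) hw false A
  have hwb := hatw_nonneg (k := k) hw true B
  have hwa' := hatw_nonneg (k := k) hw true A
  have hwb' := hatw_nonneg (k := k) hw false B
  have haA := alpha_nonneg hp σ A
  have haB := alpha_nonneg hp σ B
  have hm := mass_nonneg hp σ
  have hb := beta_nonneg hp σ A B
  by_cases hcol : collide σ A B
  · rw [if_pos hcol]
    have h1 : hatw k w false A * hatw k w true B * (alpha p σ A * alpha p σ B)
        ≤ (hatw k w false A + hatw k w true A) * alpha p σ A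
            * ((hatw k w false B + hatw k w true B) * alpha p σ B) := by
      have hcoef : hatw k w false A * hatw k w true B
          ≤ (hatw k w false A + hatw k w true A) * (hatw k w false B + hatw k w true B) := by
        nlinarith
      calc hatw k w false A * hatw k w true B * (alpha p σ A * alpha p σ B)
          ≤ ((hatw k w false A + hatw k w true A) * (hatw k w false B + hatw k w true B))
              * (alpha p σ A * alpha p σ B) :=
            mul_le_mul_of_nonneg_right hcoef (mul_nonneg haA haB)
        _ = (hatw k w false A + hatw k w true A) * alpha p σ A
            * ((hatw k w false B + hatw k w true B) * alpha p σ B) := by ring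
    nlinarith [mul_nonneg (mul_nonneg hwa hwb) (mul_nonneg hm hb)]
  · rw [if_neg hcol]
    by_cases hcA : compat σ A
    · by_cases hcB : compat σ B
      · rw [← factorization p hcA hcB hcol]
        ring_nf
        exact le_refl _
      · rw [alpha_of_not_compat p hcB]
        nlinarith [mul_nonneg (mul_nonneg hwa hwb) (mul_nonneg hm hb)]
    · rw [alpha_of_not_compat p hcA]
      nlinarith [mul_nonneg (mul_nonneg hwa hwb) (mul_nonneg hm hb)]

/-- Colliding pairs are dominated by `∑ⱼ MMⱼ²`. -/
lemma collide_le_sumMM {k : ℕ} {p : Fin n → ℝ} {w : Bool → Subcube n → ℝ}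
    (hp : ∀ i, 0 ≤ p i ∧ p i ≤ 1) (hw : ∀ z A, 0 ≤ w z A) (σ : Subcube n) :
    (∑ A : Subcube n, ∑ B : Subcube n,
      (if collide σ A B then
          (hatw k w false A + hatw k w true A) * alpha p σ A
            * ((hatw k w false B + hatw k w true B) * alpha p σ B) else 0))
      ≤ ∑ j, (MM k p w j σ)^2 := by
  have term_nonneg : ∀ (A B : Subcube n) (j : Fin n), (0:ℝ) ≤
      (if σ j = none ∧ (A j).isSome ∧ (B j).isSome then
        (hatw k w false A + hatw k w true A) * alpha p σ A
          * ((hatw k w false B + hatw k w true B) * alpha p σ B) else 0) := by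
    intro A B j
    by_cases h : σ j = none ∧ (A j).isSome ∧ (B j).isSome
    · rw [if_pos h]
      have h1 := mul_nonneg (add_nonneg (hatw_nonneg (k := k) hw false A)
        (hatw_nonneg (k := k) hw true A)) (alpha_nonneg hp σ A)
      have h2 := mul_nonneg (add_nonneg (hatw_nonneg (k := k) hw false B)
        (hatw_nonneg (k := k) hw true B)) (alpha_nonneg hp σ B)
      exact mul_nonneg h1 h2
    · rw [if_neg h]
  have step1 : (∑ A : Subcube n, ∑ B : Subcube n,
      (if collide σ A B then
          (hatw k w false A + hatw k w true A) * alpha p σ A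
            * ((hatw k w false B + hatw k w true B) * alpha p σ B) else 0))
      ≤ ∑ A : Subcube n, ∑ B : Subcube n, ∑ j,
          (if σ j = none ∧ (A j).isSome ∧ (B j).isSome then
            (hatw k w false A + hatw k w true A) * alpha p σ A
              * ((hatw k w false B + hatw k w true B) * alpha p σ B) else 0) := by
    refine Finset.sum_le_sum (fun A _ => Finset.sum_le_sum (fun B _ => ?_))
    by_cases hcol : collide σ A B
    · rw [if_pos hcol]
      obtain ⟨j0, hj0⟩ := hcol
      calc (hatw k w false A + hatw k w true A) * alpha p σ A
            * ((hatw k w false B + hatw k w true B) * alpha p σ B)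
          = (if σ j0 = none ∧ (A j0).isSome ∧ (B j0).isSome then
              (hatw k w false A + hatw k w true A) * alpha p σ A
                * ((hatw k w false B + hatw k w true B) * alpha p σ B) else 0) := by
            rw [if_pos hj0]
        _ ≤ ∑ j, (if σ j = none ∧ (A j).isSome ∧ (B j).isSome then
              (hatw k w false A + hatw k w true A) * alpha p σ A
                * ((hatw k w false B + hatw k w true B) * alpha p σ B) else 0) :=
            Finset.single_le_sum (fun j _ => term_nonneg A B j) (Finset.mem_univ j0)
    · rw [if_neg hcol]
      exact Finset.sum_nonneg (fun j _ => term_nonneg A B j)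
  refine le_trans step1 ?_
  rw [show (∑ A : Subcube n, ∑ B : Subcube n, ∑ j, (if σ j = none ∧ (A j).isSome ∧ (B j).isSome then
            (hatw k w false A + hatw k w true A) * alpha p σ A
              * ((hatw k w false B + hatw k w true B) * alpha p σ B) else 0))
      = ∑ j, ∑ A : Subcube n, ∑ B : Subcube n, (if σ j = none ∧ (A j).isSome ∧ (B j).isSome then
            (hatw k w false A + hatw k w true A) * alpha p σ A
              * ((hatw k w false B + hatw k w true B) * alpha p σ B) else 0) from by
    rw [Finset.sum_congr rfl (fun (A : Subcube n) (_ : A ∈ Finset.univ) =>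
      (Finset.sum_comm : (∑ B : Subcube n, ∑ j, _) = _))]
    exact Finset.sum_comm]
  refine Finset.sum_le_sum (fun j _ => ?_)
  by_cases hσ : σ j = none
  · have hMM : MM k p w j σ = ∑ A : Subcube n,
        (if (A j).isSome then (hatw k w false A + hatw k w true A) * alpha p σ A else 0) := by
      unfold MM; rw [if_pos hσ]
    rw [hMM, sq, Finset.sum_mul_sum]
    refine le_of_eq (Finset.sum_congr rfl (fun A _ => Finset.sum_congr rfl (fun B _ => ?_)))
    by_cases hA : (A j).isSome <;> by_cases hB : (B j).isSome <;>
      simp [hσ, hA, hB]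
  · have hMM : MM k p w j σ = 0 := by unfold MM; rw [if_neg hσ]
    rw [hMM]
    refine le_of_eq ?_
    rw [show (0:ℝ)^2 = 0 from by norm_num]
    refine Finset.sum_eq_zero (fun A _ => Finset.sum_eq_zero (fun B _ => ?_))
    rw [if_neg (by tauto)]

/-- `SS ≤ mass`. -/
lemma SS_le_mass {k : ℕ} {p : Fin n → ℝ} {w : Bool → Subcube n → ℝ}
    (hp : ∀ i, 0 ≤ p i ∧ p i ≤ 1) (hw : ∀ z A, 0 ≤ w z A)
    (hsum : ∀ x, cubeCov (w false) x + cubeCov (w true) x = 1)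
    (z : Bool) (σ : Subcube n) : SS k p w z σ ≤ mass p σ := by
  unfold SS mass
  refine Finset.sum_le_sum (fun x _ => ?_)
  have h1 := nu_nonneg hp σ x
  have h2 := covS_le_one (k := k) hw hsum z x
  nlinarith

/-- total `MM` bound. -/
lemma sum_MM_le {k : ℕ} {p : Fin n → ℝ} {w : Bool → Subcube n → ℝ}
    (hp : ∀ i, 0 ≤ p i ∧ p i ≤ 1) (hw : ∀ z A, 0 ≤ w z A)
    (hsum : ∀ x, cubeCov (w false) x + cubeCov (w true) x = 1) (σ : Subcube n) :
    ∑ j, MM k p w j σ ≤ (k:ℝ) * mass p σ := by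
  have step1 : ∑ j, MM k p w j σ ≤ ∑ j, ∑ A : Subcube n,
      (if (A j).isSome then (hatw k w false A + hatw k w true A) * alpha p σ A else 0) := by
    refine Finset.sum_le_sum (fun j _ => ?_)
    unfold MM
    by_cases hσ : σ j = none
    · rw [if_pos hσ]
    · rw [if_neg hσ]
      refine Finset.sum_nonneg (fun A _ => ?_)
      by_cases hA : (A j).isSome
      · rw [if_pos hA]
        exact mul_nonneg (add_nonneg (hatw_nonneg (k := k) hw false A)
          (hatw_nonneg (k := k) hw true A)) (alpha_nonneg hp σ A)
      · rw [if_neg hA]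
  have step2 : ∑ j, ∑ A : Subcube n,
      (if (A j).isSome then (hatw k w false A + hatw k w true A) * alpha p σ A else 0)
      = ∑ A : Subcube n, ((hatw k w false A + hatw k w true A) * alpha p σ A) * (cubeSize A : ℝ) := by
    rw [Finset.sum_comm]
    refine Finset.sum_congr rfl (fun A _ => ?_)
    rw [← Finset.sum_filter]
    rw [Finset.sum_const, nsmul_eq_mul]
    unfold cubeSize
    ring
  have step3 : ∑ A : Subcube n, ((hatw k w false A + hatw k w true A) * alpha p σ A) * (cubeSize A : ℝ)
      ≤ ∑ A : Subcube n, (k:ℝ) * ((hatw k w false A + hatw k w true A) * alpha p σ A) := by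
    refine Finset.sum_le_sum (fun A _ => ?_)
    by_cases hA : cubeSize A ≤ k
    · have h1 : (cubeSize A : ℝ) ≤ (k:ℝ) := by exact_mod_cast hA
      have h2 : 0 ≤ (hatw k w false A + hatw k w true A) * alpha p σ A :=
        mul_nonneg (add_nonneg (hatw_nonneg (k := k) hw false A)
          (hatw_nonneg (k := k) hw true A)) (alpha_nonneg hp σ A)
      nlinarith
    · have h0 : hatw k w false A = 0 := by unfold hatw; rw [if_neg hA]
      have h1 : hatw k w true A = 0 := by unfold hatw; rw [if_neg hA]
      rw [h0, h1]
      simp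
  have step4 : ∑ A : Subcube n, (k:ℝ) * ((hatw k w false A + hatw k w true A) * alpha p σ A)
      = (k:ℝ) * (SS k p w false σ + SS k p w true σ) := by
    rw [SS_eq_sum_alpha, SS_eq_sum_alpha, ← Finset.mul_sum, ← Finset.sum_add_distrib]
    congr 1
    refine Finset.sum_congr rfl (fun A _ => ?_)
    ring
  have step5 : SS k p w false σ + SS k p w true σ ≤ mass p σ := by
    unfold SS mass
    rw [← Finset.sum_add_distrib]
    refine Finset.sum_le_sum (fun x _ => ?_)
    have h1 := nu_nonneg hp σ x
    have hc0 := covS_le_cubeCov (k := k) hw false x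
    have hc1 := covS_le_cubeCov (k := k) hw true x
    have hs := hsum x
    nlinarith
  have hk0 : (0:ℝ) ≤ (k:ℝ) := Nat.cast_nonneg k
  calc ∑ j, MM k p w j σ ≤ _ := step1
    _ = _ := step2
    _ ≤ _ := step3
    _ = (k:ℝ) * (SS k p w false σ + SS k p w true σ) := step4
    _ ≤ (k:ℝ) * mass p σ := by nlinarith

/-- **Key lemma**: a balanced state has large `∑ⱼ MMⱼ²`. -/
lemma key_balanced {k : ℕ} {p : Fin n → ℝ} {w : Bool → Subcube n → ℝ}
    {g : (Fin n → Bool) → Bool}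
    (hp : ∀ i, 0 ≤ p i ∧ p i ≤ 1) (hw : ∀ z A, 0 ≤ w z A)
    (hcov : ∀ x, 1 - 1/8 ≤ cubeCov (w (g x)) x)
    (hsum : ∀ x, cubeCov (w false) x + cubeCov (w true) x = 1)
    {σ : Subcube n} (hb : bal k p w σ) :
    (7/200) * (mass p σ)^2 ≤ ∑ j, (MM k p w j σ)^2 := by
  have hm := mass_nonneg hp σ
  have h1 : (2/5 * mass p σ) * (2/5 * mass p σ) ≤ SS k p w false σ * SS k p w true σ :=
    mul_le_mul hb.1 hb.2 (by linarith) (le_trans (by linarith) hb.1)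
  have h3 : (∑ x, nu p σ x * (covS k w false x * covS k w true x)) ≤ 1/8 * mass p σ := by
    unfold mass
    rw [Finset.mul_sum]
    refine Finset.sum_le_sum (fun x _ => ?_)
    have ha := nu_nonneg hp σ x
    have hbb := covS_mul_le (k := k) hw hcov hsum x
    nlinarith
  have h4 : SS k p w false σ * SS k p w true σ
      ≤ mass p σ * (∑ x, nu p σ x * (covS k w false x * covS k w true x))
        + ∑ j, (MM k p w j σ)^2 := by
    rw [SS_eq_sum_alpha, SS_eq_sum_alpha, Finset.sum_mul_sum, prod_expand]
    rw [Finset.mul_sum]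
    have perpair : ∀ A B : Subcube n,
        hatw k w false A * alpha p σ A * (hatw k w true B * alpha p σ B)
          - mass p σ * (hatw k w false A * hatw k w true B * beta p σ A B)
        ≤ (if collide σ A B then
            (hatw k w false A + hatw k w true A) * alpha p σ A
              * ((hatw k w false B + hatw k w true B) * alpha p σ B) else 0) := by
      intro A B
      have hpb := pair_bound (k := k) hp hw σ A B
      nlinarith [hpb]
    have main : (∑ A : Subcube n, ∑ B : Subcube n,
        (hatw k w false A * alpha p σ A * (hatw k w true B * alpha p σ B)
          - mass p σ * (hatw k w false A * hatw k w true B * beta p σ A B)))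
        ≤ ∑ A : Subcube n, ∑ B : Subcube n, (if collide σ A B then
            (hatw k w false A + hatw k w true A) * alpha p σ A
              * ((hatw k w false B + hatw k w true B) * alpha p σ B) else 0) :=
      Finset.sum_le_sum (fun A _ => Finset.sum_le_sum (fun B _ => perpair A B))
    have hcol := collide_le_sumMM (k := k) hp hw σ
    have expand : (∑ A : Subcube n, ∑ B : Subcube n,
        (hatw k w false A * alpha p σ A * (hatw k w true B * alpha p σ B)
          - mass p σ * (hatw k w false A * hatw k w true B * beta p σ A B)))
        = (∑ A : Subcube n, ∑ B : Subcube n,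
            hatw k w false A * alpha p σ A * (hatw k w true B * alpha p σ B))
          - (∑ A : Subcube n, mass p σ * ∑ B : Subcube n,
              hatw k w false A * hatw k w true B * beta p σ A B) := by
      rw [← Finset.sum_sub_distrib]
      refine Finset.sum_congr rfl (fun A _ => ?_)
      rw [Finset.mul_sum, ← Finset.sum_sub_distrib]
    have := le_trans main hcol
    rw [expand] at this
    linarith
  nlinarith [h4, h3, h1, hm]

/-- Heavy coordinate via the maximizer. -/
lemma pick_heavy {k : ℕ} {p : Fin n → ℝ} {w : Bool → Subcube n → ℝ}
    {g : (Fin n → Bool) → Bool}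
    (hp : ∀ i, 0 ≤ p i ∧ p i ≤ 1) (hw : ∀ z A, 0 ≤ w z A)
    (hcov : ∀ x, 1 - 1/8 ≤ cubeCov (w (g x)) x)
    (hsum : ∀ x, cubeCov (w false) x + cubeCov (w true) x = 1)
    {σ : Subcube n} (hb : bal k p w σ) (hfree : (freeSet σ).Nonempty) :
    (7/200) * mass p σ ≤ (k:ℝ) * MM k p w (pick k p w σ hfree) σ := by
  set j0 := pick k p w σ hfree with hj0
  have hspec := Classical.choose_spec (Finset.exists_max_image (freeSet σ)
    (fun j => MM k p w j σ) hfree)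
  have hmax : ∀ j, MM k p w j σ ≤ MM k p w j0 σ := by
    intro j
    by_cases hjf : j ∈ freeSet σ
    · exact hspec.2 j hjf
    · have : σ j ≠ none := by
        intro hc
        exact hjf (by simp [freeSet, hc])
      have h0 : MM k p w j σ = 0 := by unfold MM; rw [if_neg this]
      rw [h0]
      exact MM_nonneg hp hw j0 σ
  have hM0 : 0 ≤ MM k p w j0 σ := MM_nonneg hp hw j0 σ
  have hkey := key_balanced (k := k) hp hw hcov hsum hb
  have hsq : ∑ j, (MM k p w j σ)^2 ≤ MM k p w j0 σ * ∑ j, MM k p w j σ := by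
    rw [Finset.mul_sum]
    refine Finset.sum_le_sum (fun j _ => ?_)
    have h1 := hmax j
    have h2 := MM_nonneg (k := k) hp hw j σ
    nlinarith
  have hS := sum_MM_le (k := k) hp hw hsum σ
  have hm := mass_nonneg hp σ
  rcases eq_or_lt_of_le hm with hm0 | hm0
  · rw [← hm0]
    simp
    positivity
  · have hchain : (7/200) * (mass p σ)^2 ≤ (MM k p w j0 σ * ((k:ℝ) * mass p σ)) := by
      calc (7/200) * (mass p σ)^2 ≤ ∑ j, (MM k p w j σ)^2 := hkey
        _ ≤ MM k p w j0 σ * ∑ j, MM k p w j σ := hsq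
        _ ≤ MM k p w j0 σ * ((k:ℝ) * mass p σ) := by
            apply mul_le_mul_of_nonneg_left hS hM0
    have := mul_le_mul_of_nonneg_right (le_refl (mass p σ)) hm
    have goal' : (7/200 * mass p σ) * mass p σ ≤ ((k:ℝ) * MM k p w j0 σ) * mass p σ := by
      nlinarith [hchain]
    exact le_of_mul_le_mul_right goal' hm0

end QP

end L5QP


open scoped BigOperators
open scoped Classical

noncomputable section L6QP

namespace QP

variable {n : ℕ}

lemma covS_ge {k : ℕ} {w : Bool → Subcube n → ℝ} (hw : ∀ z A, 0 ≤ w z A)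
    (z : Bool) (x : Fin n → Bool) :
    cubeCov (w z) x - Big k w ≤ covS k w z x := by
  have h := cubeCov_sub_covS_le_Big (k := k) hw x
  have h0 := covS_le_cubeCov (k := k) hw false x
  have h1 := covS_le_cubeCov (k := k) hw true x
  cases z <;> linarith

/-- Error bound at an imbalanced leaf. -/
lemma leaf_err {k : ℕ} {p : Fin n → ℝ} {w : Bool → Subcube n → ℝ}
    {g : (Fin n → Bool) → Bool}
    (hp : ∀ i, 0 ≤ p i ∧ p i ≤ 1) (hw : ∀ z A, 0 ≤ w z A)
    (hcov : ∀ x, 1 - 1/8 ≤ cubeCov (w (g x)) x)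
    (hBig : Big k w ≤ 1/128)
    {σ : Subcube n} (hnb : ¬ bal k p w σ) :
    (∑ x, if outz k p w σ ≠ g x then nu p σ x else 0) ≤ (256/555) * mass p σ := by
  have key : ∀ zm : Bool, SS k p w zm σ ≤ (2/5) * mass p σ →
      (∑ x, if g x = zm then nu p σ x else 0) ≤ (256/555) * mass p σ := by
    intro zm hSm
    have hlow : (111/128) * (∑ x, if g x = zm then nu p σ x else 0) ≤ SS k p w zm σ := by
      unfold SS
      rw [Finset.mul_sum]
      refine Finset.sum_le_sum (fun x _ => ?_)
      have hnu := nu_nonneg hp σ x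
      by_cases hg : g x = zm
      · rw [if_pos hg]
        have hc := hcov x
        rw [hg] at hc
        have := covS_ge (k := k) hw zm x
        have hcs : (111/128 : ℝ) ≤ covS k w zm x := by linarith
        nlinarith
      · rw [if_neg hg]
        have := covS_nonneg (k := k) hw zm x
        nlinarith
    linarith
  unfold outz
  by_cases hout : SS k p w false σ ≤ SS k p w true σ
  · rw [if_pos hout]
    have hS : SS k p w false σ ≤ (2/5) * mass p σ := by
      unfold bal at hnb
      push_neg at hnb
      by_cases hA : (2/5 : ℝ) * mass p σ ≤ SS k p w false σ
      · have := hnb hA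
        linarith
      · linarith
    have := key false hS
    calc (∑ x, if true ≠ g x then nu p σ x else 0)
        = (∑ x, if g x = false then nu p σ x else 0) := by
          refine Finset.sum_congr rfl (fun x _ => ?_)
          cases hg : g x <;> simp [hg]
      _ ≤ (256/555) * mass p σ := this
  · rw [if_neg hout]
    push_neg at hout
    have hS : SS k p w true σ ≤ (2/5) * mass p σ := by
      unfold bal at hnb
      push_neg at hnb
      by_cases hA : (2/5 : ℝ) * mass p σ ≤ SS k p w false σ
      · have := hnb hA
        linarith
      · linarith
    have := key true hS
    calc (∑ x, if false ≠ g x then nu p σ x else 0)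
        = (∑ x, if g x = true then nu p σ x else 0) := by
          refine Finset.sum_congr rfl (fun x _ => ?_)
          cases hg : g x <;> simp [hg]
      _ ≤ (256/555) * mass p σ := this

lemma errLeaf_le_mass {p : Fin n → ℝ} (hp : ∀ i, 0 ≤ p i ∧ p i ≤ 1)
    (σ : Subcube n) (P : (Fin n → Bool) → Prop) :
    (∑ x, if P x then nu p σ x else 0) ≤ mass p σ := by
  unfold mass
  refine Finset.sum_le_sum (fun x _ => ?_)
  have := nu_nonneg hp σ x
  by_cases h : P x <;> simp [h] <;> linarith

/-- A balanced state with no free coordinate has zero mass. -/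
lemma bal_no_free {k : ℕ} {p : Fin n → ℝ} {w : Bool → Subcube n → ℝ}
    {g : (Fin n → Bool) → Bool}
    (hp : ∀ i, 0 ≤ p i ∧ p i ≤ 1) (hw : ∀ z A, 0 ≤ w z A)
    (hcov : ∀ x, 1 - 1/8 ≤ cubeCov (w (g x)) x)
    (hsum : ∀ x, cubeCov (w false) x + cubeCov (w true) x = 1)
    {σ : Subcube n} (hb : bal k p w σ) (hnf : ¬ (freeSet σ).Nonempty) :
    mass p σ = 0 := by
  have hkey := key_balanced (k := k) hp hw hcov hsum hb
  have hz : ∀ j, MM k p w j σ = 0 := by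
    intro j
    have : σ j ≠ none := by
      intro hc
      exact hnf ⟨j, by simp [freeSet, hc]⟩
    unfold MM
    rw [if_neg this]
  have h0 : (∑ j, (MM k p w j σ)^2) = 0 := by
    refine Finset.sum_eq_zero (fun j _ => ?_)
    rw [hz j]; norm_num
  rw [h0] at hkey
  have hm := mass_nonneg hp σ
  nlinarith

lemma pick_mem {k : ℕ} {p : Fin n → ℝ} {w : Bool → Subcube n → ℝ}
    {σ : Subcube n} (h : (freeSet σ).Nonempty) :
    σ (pick k p w σ h) = none := by
  have hspec := Classical.choose_spec (Finset.exists_max_image (freeSet σ)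
    (fun j => MM k p w j σ) h)
  have h2 := hspec.1
  unfold pick
  simpa [freeSet] using h2

lemma T_depth (k : ℕ) (p : Fin n → ℝ) (w : Bool → Subcube n → ℝ) :
    ∀ (d : ℕ) (σ : Subcube n), (T k p w d σ).depth ≤ d := by
  intro d
  induction d with
  | zero => intro σ; rw [T]; exact le_refl 0
  | succ d ih =>
    intro σ
    rw [T]
    by_cases h : internal k p w σ
    · rw [dif_pos h]
      have h0 := ih (Function.update σ (pick k p w σ h.2) (some false))
      have h1 := ih (Function.update σ (pick k p w σ h.2) (some true))
      simp only [DTree.depth]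
      omega
    · rw [dif_neg h]
      simp [DTree.depth]

end QP

end L6QP


open scoped BigOperators
open scoped Classical

noncomputable section L7QP

namespace QP

variable {n : ℕ}

lemma nu_update_zero {σ : Subcube n} {j : Fin n} (hj : σ j = none)
    (p : Fin n → ℝ) {b : Bool} {x : Fin n → Bool} (hxb : x j ≠ b) :
    nu p (Function.update σ j (some b)) x = 0 := by
  unfold nu
  rw [if_neg]
  intro hm
  exact hxb ((memCube_update hj b x).mp hm).2

lemma errT_internal {k : ℕ} {p : Fin n → ℝ} {w : Bool → Subcube n → ℝ}
    {g : (Fin n → Bool) → Bool} {d : ℕ} {σ : Subcube n} (h : internal k p w σ) :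
    errT k p w g (d+1) σ
      = errT k p w g d (Function.update σ (pick k p w σ h.2) (some false))
        + errT k p w g d (Function.update σ (pick k p w σ h.2) (some true)) := by
  set j := pick k p w σ h.2 with hjdef
  have hj : σ j = none := pick_mem h.2
  have hT : T k p w (d+1) σ = DTree.node j
      (T k p w d (Function.update σ j (some false)))
      (T k p w d (Function.update σ j (some true))) := by
    rw [T, dif_pos h]
  unfold errT
  rw [hT, ← Finset.sum_add_distrib]
  refine Finset.sum_congr rfl (fun x _ => ?_)
  have hsplit := nu_split hj p x
  cases hx : x j
  · have hzt : nu p (Function.update σ j (some true)) x = 0 :=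
      nu_update_zero hj p (by rw [hx]; simp)
    have hnu : nu p σ x = nu p (Function.update σ j (some false)) x := by
      rw [hsplit, hzt, add_zero]
    simp only [DTree.eval, hx, if_false, Bool.false_eq_true]
    rw [hzt, hnu]
    by_cases hc : (T k p w d (Function.update σ j (some false))).eval x ≠ g x <;>
      by_cases hc2 : (T k p w d (Function.update σ j (some true))).eval x ≠ g x <;>
      simp [hc, hc2]
  · have hzf : nu p (Function.update σ j (some false)) x = 0 :=
      nu_update_zero hj p (by rw [hx]; simp)
    have hnu : nu p σ x = nu p (Function.update σ j (some true)) x := by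
      rw [hsplit, hzf, zero_add]
    simp only [DTree.eval, hx, if_true]
    rw [hzf, hnu]
    by_cases hc : (T k p w d (Function.update σ j (some false))).eval x ≠ g x <;>
      by_cases hc2 : (T k p w d (Function.update σ j (some true))).eval x ≠ g x <;>
      simp [hc, hc2]

lemma errT_leaf {k : ℕ} {p : Fin n → ℝ} {w : Bool → Subcube n → ℝ}
    {g : (Fin n → Bool) → Bool} {d : ℕ} {σ : Subcube n}
    (hT : T k p w d σ = DTree.leaf (outz k p w σ)) :
    errT k p w g d σ = ∑ x, if outz k p w σ ≠ g x then nu p σ x else 0 := by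
  unfold errT
  rw [hT]
  rfl

lemma cap_nonneg {k : ℕ} {p : Fin n → ℝ} {w : Bool → Subcube n → ℝ}
    (hp : ∀ i, 0 ≤ p i ∧ p i ≤ 1) :
    ∀ (d : ℕ) (σ : Subcube n), 0 ≤ cap k p w d σ := by
  intro d
  induction d with
  | zero =>
    intro σ
    rw [cap]
    by_cases h : internal k p w σ
    · rw [if_pos h]; exact mass_nonneg hp σ
    · rw [if_neg h]
  | succ d ih =>
    intro σ
    rw [cap]
    by_cases h : internal k p w σ
    · rw [dif_pos h]; exact add_nonneg (ih _) (ih _)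
    · rw [dif_neg h]

lemma QQ_nonneg {k : ℕ} {p : Fin n → ℝ} {w : Bool → Subcube n → ℝ}
    (hp : ∀ i, 0 ≤ p i ∧ p i ≤ 1) :
    ∀ (d : ℕ) (σ : Subcube n), 0 ≤ QQ k p w d σ := by
  intro d
  induction d with
  | zero => intro σ; rw [QQ]
  | succ d ih =>
    intro σ
    rw [QQ]
    by_cases h : internal k p w σ
    · rw [dif_pos h]
      exact add_nonneg (mass_nonneg hp σ) (add_nonneg (ih _) (ih _))
    · rw [dif_neg h]

lemma cap_le_mass {k : ℕ} {p : Fin n → ℝ} {w : Bool → Subcube n → ℝ}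
    (hp : ∀ i, 0 ≤ p i ∧ p i ≤ 1) :
    ∀ (d : ℕ) (σ : Subcube n), cap k p w d σ ≤ mass p σ := by
  intro d
  induction d with
  | zero =>
    intro σ
    rw [cap]
    by_cases h : internal k p w σ
    · rw [if_pos h]
    · rw [if_neg h]; exact mass_nonneg hp σ
  | succ d ih =>
    intro σ
    rw [cap]
    by_cases h : internal k p w σ
    · rw [dif_pos h]
      have hj : σ (pick k p w σ h.2) = none := pick_mem h.2
      have := mass_split hj p
      have h1 := ih (Function.update σ (pick k p w σ h.2) (some false))
      have h2 := ih (Function.update σ (pick k p w σ h.2) (some true))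
      linarith
    · rw [dif_neg h]; exact mass_nonneg hp σ

end QP

end L7QP


open scoped BigOperators
open scoped Classical

noncomputable section L8QP

namespace QP

variable {n : ℕ}

section Master

variable {k : ℕ} {p : Fin n → ℝ} {w : Bool → Subcube n → ℝ} {g : (Fin n → Bool) → Bool}
variable (hp : ∀ i, 0 ≤ p i ∧ p i ≤ 1) (hw : ∀ z A, 0 ≤ w z A)
variable (hcov : ∀ x, 1 - 1/8 ≤ cubeCov (w (g x)) x)
variable (hsum : ∀ x, cubeCov (w false) x + cubeCov (w true) x = 1)
variable (hBig : Big k w ≤ 1/128)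

include hp in
lemma leafsum_le_mass (σ : Subcube n) :
    (∑ x, if outz k p w σ ≠ g x then nu p σ x else 0) ≤ mass p σ := by
  unfold mass
  refine Finset.sum_le_sum (fun x _ => ?_)
  have := nu_nonneg hp σ x
  by_cases hq : outz k p w σ ≠ g x <;> simp [hq] <;> linarith

include hp in
lemma leafsum_nonneg (σ : Subcube n) :
    0 ≤ (∑ x, if outz k p w σ ≠ g x then nu p σ x else 0) := by
  refine Finset.sum_nonneg (fun x _ => ?_)
  have := nu_nonneg hp σ x
  by_cases hq : outz k p w σ ≠ g x <;> simp [hq] <;> linarith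

include hp hw hcov hsum hBig in
lemma errT_le : ∀ (d : ℕ) (σ : Subcube n),
    errT k p w g d σ ≤ (256/555) * mass p σ + cap k p w d σ := by
  intro d
  induction d with
  | zero =>
    intro σ
    have hT : T k p w 0 σ = DTree.leaf (outz k p w σ) := by rw [T]
    rw [errT_leaf hT, cap]
    by_cases h : internal k p w σ
    · rw [if_pos h]
      have h1 := leafsum_le_mass (k := k) (w := w) (g := g) hp σ
      have h2 := mass_nonneg hp σ
      linarith
    · rw [if_neg h]
      rw [internal, not_and_or] at h
      rcases h with h | h
      · have := leaf_err (k := k) hp hw hcov hBig h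
        linarith
      · by_cases hb : bal k p w σ
        · have hm0 : mass p σ = 0 := bal_no_free (k := k) hp hw hcov hsum hb h
          have h1 := leafsum_le_mass (k := k) (w := w) (g := g) hp σ
          have h2 := cap_nonneg (k := k) (w := w) hp 0 σ
          rw [cap, if_neg (by rw [internal, not_and_or]; exact Or.inr h)] at h2
          rw [hm0] at h1 ⊢
          linarith
        · have := leaf_err (k := k) hp hw hcov hBig hb
          linarith
  | succ d ih =>
    intro σ
    by_cases h : internal k p w σ
    · rw [errT_internal h, cap, dif_pos h]
      have hj : σ (pick k p w σ h.2) = none := pick_mem h.2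
      have hms := mass_split hj p
      have h1 := ih (Function.update σ (pick k p w σ h.2) (some false))
      have h2 := ih (Function.update σ (pick k p w σ h.2) (some true))
      linarith
    · have hT : T k p w (d+1) σ = DTree.leaf (outz k p w σ) := by rw [T, dif_neg h]
      rw [errT_leaf hT, cap, dif_neg h]
      rw [internal, not_and_or] at h
      rcases h with h | h
      · have := leaf_err (k := k) hp hw hcov hBig h
        linarith
      · by_cases hb : bal k p w σ
        · have hm0 : mass p σ = 0 := bal_no_free (k := k) hp hw hcov hsum hb h
          have h1 := leafsum_le_mass (k := k) (w := w) (g := g) hp σ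
          have h2 := cap_nonneg (k := k) (w := w) hp (d+1) σ
          rw [hm0] at h1 ⊢
          linarith
        · have := leaf_err (k := k) hp hw hcov hBig hb
          linarith

include hp hw hcov hsum in
lemma QQ_le : ∀ (d : ℕ) (σ : Subcube n),
    QQ k p w d σ ≤ (200 * (k:ℝ) / 7) * Phi k p w σ := by
  intro d
  induction d with
  | zero =>
    intro σ
    rw [QQ]
    have := Phi_nonneg (k := k) hp hw σ
    positivity
  | succ d ih =>
    intro σ
    rw [QQ]
    by_cases h : internal k p w σ
    · rw [dif_pos h]
      have hj : σ (pick k p w σ h.2) = none := pick_mem h.2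
      have hps := Phi_split hj k p w
      have hheavy := pick_heavy (k := k) hp hw hcov hsum h.1 h.2
      have h1 := ih (Function.update σ (pick k p w σ h.2) (some false))
      have h2 := ih (Function.update σ (pick k p w σ h.2) (some true))
      have hMM : mass p σ ≤ (200 * (k:ℝ) / 7) * MM k p w (pick k p w σ h.2) σ := by
        have hk0 : (0:ℝ) ≤ (k:ℝ) := Nat.cast_nonneg k
        nlinarith
      have hps' : (200 * (k:ℝ) / 7) * Phi k p w σ
          = (200 * (k:ℝ) / 7) * MM k p w (pick k p w σ h.2) σ
            + ((200 * (k:ℝ) / 7) * Phi k p w (Function.update σ (pick k p w σ h.2) (some false))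
              + (200 * (k:ℝ) / 7) * Phi k p w (Function.update σ (pick k p w σ h.2) (some true))) := by
        rw [hps]; ring
      linarith
    · rw [dif_neg h]
      have := Phi_nonneg (k := k) hp hw σ
      positivity

include hp in
lemma cap_mul_le_QQ : ∀ (d : ℕ) (σ : Subcube n),
    (d:ℝ) * cap k p w d σ ≤ QQ k p w d σ := by
  intro d
  induction d with
  | zero => intro σ; rw [QQ]; norm_num
  | succ d ih =>
    intro σ
    rw [QQ, cap]
    by_cases h : internal k p w σ
    · rw [dif_pos h, dif_pos h]
      have hj : σ (pick k p w σ h.2) = none := pick_mem h.2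
      have hms := mass_split hj p
      have h1 := ih (Function.update σ (pick k p w σ h.2) (some false))
      have h2 := ih (Function.update σ (pick k p w σ h.2) (some true))
      have hc1 := cap_le_mass (k := k) (w := w) hp d
        (Function.update σ (pick k p w σ h.2) (some false))
      have hc2 := cap_le_mass (k := k) (w := w) hp d
        (Function.update σ (pick k p w σ h.2) (some true))
      push_cast
      nlinarith [cap_nonneg (k := k) (w := w) hp d
        (Function.update σ (pick k p w σ h.2) (some false)),
        cap_nonneg (k := k) (w := w) hp d
        (Function.update σ (pick k p w σ h.2) (some true))]
    · rw [dif_neg h, dif_neg h]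
      norm_num

end Master

end QP

end L8QP


open scoped BigOperators
open scoped Classical

noncomputable section L9QP

namespace QP

variable {n : ℕ}

def root (n : ℕ) : Subcube n := fun _ => none

lemma nu_root (p : Fin n → ℝ) (x : Fin n → Bool) : nu p (root n) x = bitProd p x := by
  unfold nu
  rw [if_pos]
  intro i b h
  exact absurd h (by simp [root])

lemma mass_root (p : Fin n → ℝ) : mass p (root n) = 1 := by
  rw [mass_eq_prod]
  rw [Finset.prod_eq_one (fun i _ => ?_)]
  unfold coordFactor root
  rfl

lemma Phi_root_le {k : ℕ} {p : Fin n → ℝ} {w : Bool → Subcube n → ℝ}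
    (hp : ∀ i, 0 ≤ p i ∧ p i ≤ 1) (hw : ∀ z A, 0 ≤ w z A)
    (hsum : ∀ x, cubeCov (w false) x + cubeCov (w true) x = 1) :
    Phi k p w (root n) ≤ (k:ℝ) := by
  have := sum_MM_le (k := k) hp hw hsum (root n)
  rw [mass_root, mul_one] at this
  exact this

lemma qErr_eq_errT (k : ℕ) (p : Fin n → ℝ) (w : Bool → Subcube n → ℝ)
    (g : (Fin n → Bool) → Bool) (d : ℕ) :
    qErr (bitProd p) g (T k p w d (root n)) = errT k p w g d (root n) := by
  unfold qErr errT
  refine Finset.sum_congr rfl (fun x _ => ?_)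
  rw [nu_root]

/-- Master bound at the root. -/
lemma main_bound {k : ℕ} {p : Fin n → ℝ} {w : Bool → Subcube n → ℝ}
    {g : (Fin n → Bool) → Bool}
    (hp : ∀ i, 0 ≤ p i ∧ p i ≤ 1) (hw : ∀ z A, 0 ≤ w z A)
    (hcov : ∀ x, 1 - 1/8 ≤ cubeCov (w (g x)) x)
    (hsum : ∀ x, cubeCov (w false) x + cubeCov (w true) x = 1)
    (hBig : Big k w ≤ 1/128) (hk : 1 ≤ k) :
    qErr (bitProd p) g (T k p w (1024 * k^2) (root n)) ≤ 0.49 := by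
  rw [qErr_eq_errT]
  have herr := errT_le (k := k) hp hw hcov hsum hBig (1024 * k^2) (root n)
  rw [mass_root] at herr
  have hcapQQ := cap_mul_le_QQ (k := k) (w := w) hp (1024 * k^2) (root n)
  have hQQ := QQ_le (k := k) hp hw hcov hsum (1024 * k^2) (root n)
  have hPhi := Phi_root_le (k := k) hp hw hsum
  have hk1 : (1:ℝ) ≤ (k:ℝ) := by exact_mod_cast hk
  have hkpos : (0:ℝ) < (k:ℝ) := by linarith
  have hD : ((1024 * k^2 : ℕ):ℝ) = 1024 * (k:ℝ)^2 := by push_cast; ring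
  have hQQ2 : QQ k p w (1024 * k^2) (root n) ≤ (200 * (k:ℝ) / 7) * (k:ℝ) := by
    calc QQ k p w (1024 * k^2) (root n) ≤ (200 * (k:ℝ) / 7) * Phi k p w (root n) := hQQ
      _ ≤ (200 * (k:ℝ) / 7) * (k:ℝ) := by
          apply mul_le_mul_of_nonneg_left hPhi
          positivity
  have hcap : cap k p w (1024 * k^2) (root n) ≤ 25/896 := by
    have h1 : (1024 * (k:ℝ)^2) * cap k p w (1024 * k^2) (root n) ≤ 200 * (k:ℝ)^2 / 7 := by
      rw [← hD]
      calc ((1024 * k^2 : ℕ):ℝ) * cap k p w (1024 * k^2) (root n)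
          ≤ QQ k p w (1024 * k^2) (root n) := hcapQQ
        _ ≤ (200 * (k:ℝ) / 7) * (k:ℝ) := hQQ2
        _ = 200 * (k:ℝ)^2 / 7 := by ring
    have hk2 : (0:ℝ) < (k:ℝ)^2 := by positivity
    nlinarith
  have : errT k p w g (1024 * k^2) (root n) ≤ 256/555 * 1 + 25/896 := by linarith
  calc errT k p w g (1024 * k^2) (root n) ≤ 256/555 * 1 + 25/896 := this
    _ ≤ 0.49 := by norm_num

lemma QCdist_le {k : ℕ} {p : Fin n → ℝ} {w : Bool → Subcube n → ℝ}
    {g : (Fin n → Bool) → Bool}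
    (hp : ∀ i, 0 ≤ p i ∧ p i ≤ 1) (hw : ∀ z A, 0 ≤ w z A)
    (hcov : ∀ x, 1 - 1/8 ≤ cubeCov (w (g x)) x)
    (hsum : ∀ x, cubeCov (w false) x + cubeCov (w true) x = 1)
    (hBig : Big k w ≤ 1/128) (hk : 1 ≤ k) :
    QCdist (bitProd p) g 0.49 ≤ 1024 * k^2 := by
  apply Nat.sInf_le
  exact ⟨T k p w (1024 * k^2) (root n), T_depth k p w (1024 * k^2) (root n),
    main_bound hp hw hcov hsum hBig hk⟩

end QP

end L9QP


open scoped BigOperators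
open scoped Classical

noncomputable section L10QP

namespace QP

variable {n : ℕ}

def enc (x : Fin n → Bool) : Subcube n := fun i => some (x i)

lemma enc_inj {x y : Fin n → Bool} (h : enc x = enc y) : x = y := by
  funext i
  have := congrFun h i
  unfold enc at this
  injection this

lemma mem_enc_iff (x y : Fin n → Bool) : memCube (enc x) y ↔ x = y := by
  constructor
  · intro h
    funext i
    exact (h i (x i) rfl).symm
  · rintro rfl i b hb
    unfold enc at hb
    exact Option.some.inj hb

def pcw (g : (Fin n → Bool) → Bool) (z : Bool) (A : Subcube n) : ℝ :=
  if ∃ x, enc x = A ∧ g x = z then 1 else 0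

lemma cubeCov_pcw (g : (Fin n → Bool) → Bool) (z : Bool) (y : Fin n → Bool) :
    cubeCov (pcw g z) y = if g y = z then 1 else 0 := by
  unfold cubeCov
  rw [Finset.sum_eq_single_of_mem (enc y) (Finset.mem_univ _)]
  · rw [if_pos ((mem_enc_iff y y).mpr rfl)]
    unfold pcw
    by_cases hz : g y = z
    · rw [if_pos ⟨y, rfl, hz⟩, if_pos hz]
    · rw [if_neg ?_, if_neg hz]
      rintro ⟨x, hx1, hx2⟩
      exact hz ((enc_inj hx1) ▸ hx2)
  · intro A _ hA
    by_cases hm : memCube A y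
    · rw [if_pos hm]
      unfold pcw
      rw [if_neg]
      rintro ⟨x, rfl, -⟩
      exact hA (by rw [(mem_enc_iff x y).mp hm])
    · rw [if_neg hm]

lemma qprt_set_nonempty (g : (Fin n → Bool) → Bool) :
    Set.Nonempty { v : ℝ | ∃ w : Bool → Subcube n → ℝ,
      (∀ z A, 0 ≤ w z A) ∧
      (∀ x, 1 - (1/8 : ℝ) ≤ cubeCov (w (g x)) x) ∧
      (∀ x, cubeCov (w false) x + cubeCov (w true) x = 1) ∧
      v = ∑ A : Subcube n, (w false A + w true A) * 2 ^ cubeSize A } := by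
  refine ⟨∑ A : Subcube n, (pcw g false A + pcw g true A) * 2 ^ cubeSize A, pcw g, ?_, ?_, ?_, rfl⟩
  · intro z A
    unfold pcw
    by_cases h : ∃ x, enc x = A ∧ g x = z <;> simp [h]
  · intro x
    rw [cubeCov_pcw, if_pos rfl]
    norm_num
  · intro x
    rw [cubeCov_pcw, cubeCov_pcw]
    cases hg : g x <;> simp [hg]

lemma qprt_nonneg (g : (Fin n → Bool) → Bool) : 0 ≤ qprt g (1/8) := by
  apply Real.sInf_nonneg
  rintro v ⟨w, hw, -, -, hval⟩
  rw [hval]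
  refine Finset.sum_nonneg (fun A _ => ?_)
  exact mul_nonneg (add_nonneg (hw false A) (hw true A)) (by positivity)

end QP

end L10QP


/-- **QC vs query partition bound (Theorem 1.2).** There is a universal constant `C > 0`
such that for every `n`, every `g : {0,1}ⁿ → {0,1}` and every bit-wise product
distribution `μ` on `{0,1}ⁿ` (with `log qprt_{1/8}(g) ≥ 2`),
`QC^μ_{0.49}(g) ≤ C · (log qprt_{1/8}(g) · log log qprt_{1/8}(g))²`. -/
theorem qc_le_log_qprt_sq :
    ∃ C : ℝ, 0 < C ∧
      ∀ (n : ℕ) (g : (Fin n → Bool) → Bool) (p : Fin n → ℝ),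
        (∀ i, 0 ≤ p i ∧ p i ≤ 1) →
        2 ≤ Real.logb 2 (qprt g (1/8)) →
        (QCdist (bitProd p) g 0.49 : ℝ) ≤
          C * (Real.logb 2 (qprt g (1/8)) *
            Real.logb 2 (Real.logb 2 (qprt g (1/8)))) ^ 2 := by
  refine ⟨25600, by norm_num, ?_⟩
  intro n g p hp hlog
  set L := Real.logb 2 (qprt g (1/8)) with hLdef
  have hq_nonneg : 0 ≤ qprt g (1/8) := QP.qprt_nonneg g
  have hqpos : 0 < qprt g (1/8) := by
    rcases lt_or_eq_of_le hq_nonneg with h | h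
    · exact h
    · exfalso
      rw [hLdef, ← h, Real.logb_zero] at hlog
      norm_num at hlog
  have hq4 : 4 ≤ qprt g (1/8) := by
    have h1 : (2:ℝ)^(2:ℝ) ≤ (2:ℝ)^L := (Real.rpow_le_rpow_left_iff (by norm_num)).mpr hlog
    have h2 : (2:ℝ)^L = qprt g (1/8) := Real.rpow_logb (by norm_num) (by norm_num) hqpos
    have h3 : (2:ℝ)^(2:ℝ) = 4 := by
      rw [show (2:ℝ) = ((2:ℕ):ℝ) from by norm_num]
      rw [Real.rpow_natCast]
      norm_num
    linarith
  have hSne := QP.qprt_set_nonempty g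
  obtain ⟨v, hvmem, hvlt⟩ := exists_lt_of_csInf_lt hSne
    (lt_add_one (qprt g (1/8)))
  obtain ⟨w, hw, hcov, hsum, hval⟩ := hvmem
  set k := ⌈L⌉₊ + 7 with hkdef
  have hk1 : 1 ≤ k := by omega
  have hL0 : (0:ℝ) ≤ L := by linarith
  have hceil : ((⌈L⌉₊ : ℕ) : ℝ) < L + 1 := Nat.ceil_lt_add_one hL0
  have hkR : ((k:ℕ):ℝ) ≤ L + 8 := by
    rw [hkdef]; push_cast; linarith
  have hkL : ((k:ℕ):ℝ) ≤ 5 * L := by linarith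
  have hpow : 256 * qprt g (1/8) ≤ (2:ℝ)^(k+1) := by
    have e1 : ((k+1:ℕ):ℝ) = (⌈L⌉₊ : ℝ) + 8 := by rw [hkdef]; push_cast; ring
    have e2 : (2:ℝ)^((k+1:ℕ):ℝ) = (2:ℝ)^(k+1:ℕ) := Real.rpow_natCast 2 (k+1)
    have e3 : L + 8 ≤ (⌈L⌉₊:ℝ) + 8 := by have := Nat.le_ceil L; linarith
    have e4 : (2:ℝ)^(L+8) ≤ (2:ℝ)^((⌈L⌉₊:ℝ)+8) :=
      (Real.rpow_le_rpow_left_iff (by norm_num)).mpr e3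
    have e5 : (2:ℝ)^(L+8) = qprt g (1/8) * (2:ℝ)^(8:ℝ) := by
      rw [Real.rpow_add (by norm_num), Real.rpow_logb (by norm_num) (by norm_num) hqpos]
    have e6 : (2:ℝ)^(8:ℝ) = 256 := by
      rw [show (8:ℝ) = ((8:ℕ):ℝ) from by norm_num]
      rw [Real.rpow_natCast]
      norm_num
    calc 256 * qprt g (1/8) = (2:ℝ)^(L+8) := by rw [e5, e6]; ring
      _ ≤ (2:ℝ)^((⌈L⌉₊:ℝ)+8) := e4
      _ = (2:ℝ)^((k+1:ℕ):ℝ) := by rw [e1]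
      _ = (2:ℝ)^(k+1) := e2
  have hBig : QP.Big k w ≤ 1/128 := by
    apply QP.Big_le hw hval
    have : 128 * v ≤ 128 * (qprt g (1/8) + 1) := by linarith
    have h2 : 128 * (qprt g (1/8) + 1) ≤ 256 * qprt g (1/8) := by linarith
    linarith
  have hQC := QP.QCdist_le hp hw hcov hsum hBig hk1
  have hQCR : (QCdist (bitProd p) g 0.49 : ℝ) ≤ 1024 * ((k:ℕ):ℝ)^2 := by
    calc (QCdist (bitProd p) g 0.49 : ℝ) ≤ ((1024 * k^2 : ℕ):ℝ) := by exact_mod_cast hQC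
      _ = 1024 * ((k:ℕ):ℝ)^2 := by push_cast; ring
  have hLL : (1:ℝ) ≤ Real.logb 2 L := by
    have h1 : Real.logb 2 2 ≤ Real.logb 2 L :=
      (Real.logb_le_logb (by norm_num) (by norm_num) (by linarith)).mpr hlog
    rw [Real.logb_self_eq_one (by norm_num)] at h1
    exact h1
  have hk0 : (0:ℝ) ≤ ((k:ℕ):ℝ) := by positivity
  have hk2 : ((k:ℕ):ℝ)^2 ≤ 25 * L^2 := by nlinarith [hkL, hk0]
  have h3 : 1024 * ((k:ℕ):ℝ)^2 ≤ 25600 * L^2 := by nlinarith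
  have hLL2 : (1:ℝ) ≤ (Real.logb 2 L)^2 := by nlinarith [hLL]
  have hL2 : (0:ℝ) ≤ L^2 := sq_nonneg L
  have hfinal : 25600 * L^2 ≤ 25600 * (L * Real.logb 2 L)^2 := by
    have he : (L * Real.logb 2 L)^2 = L^2 * (Real.logb 2 L)^2 := by ring
    rw [he]
    nlinarith [mul_le_mul_of_nonneg_left hLL2 hL2]
  linarith
end

section
/- For every function f : X × Y → Z on finite sets X, Y, Z and every ε, δ ∈ (0,1): srec_{ε,δ}(f) = max_μ srec^μ_{ε,δ}(f), where the maximum is over all probability distributions μ on X × Y. -/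
open scoped BigOperators
open scoped Classical

section AuxSrec

open Finset

variable {X Y : Type} [Fintype X] [Fintype Y]

lemma rcov_nonneg {w : Finset X × Finset Y → ℝ} (hw : ∀ R, 0 ≤ w R) (x : X) (y : Y) :
    0 ≤ rcov w x y := by
  refine Finset.sum_nonneg fun R _ => ?_
  split_ifs
  · exact hw R
  · exact le_rfl

lemma rcov_combo (a b : ℝ) (w w' : Finset X × Finset Y → ℝ) (x : X) (y : Y) :
    rcov (fun R => a * w R + b * w' R) x y = a * rcov w x y + b * rcov w' x y := by
  simp only [rcov, Finset.mul_sum, ← Finset.sum_add_distrib]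
  refine Finset.sum_congr rfl fun R _ => ?_
  split_ifs <;> ring

/-- The "diagonal" weight function putting weight `c p` on the singleton rectangle at `p`. -/
noncomputable def diagW (c : X × Y → ℝ) : Finset X × Finset Y → ℝ :=
  fun R => ∑ p : X × Y, if R = ({p.1}, {p.2}) then c p else 0

lemma diagW_nonneg {c : X × Y → ℝ} (hc : ∀ p, 0 ≤ c p) (R : Finset X × Finset Y) :
    0 ≤ diagW c R := by
  refine Finset.sum_nonneg fun p _ => ?_
  split_ifs
  · exact hc p
  · exact le_rfl

lemma rcov_diagW (c : X × Y → ℝ) (x : X) (y : Y) : rcov (diagW c) x y = c (x, y) := by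
  classical
  have h1 : rcov (diagW c) x y
      = ∑ R : Finset X × Finset Y, ∑ p : X × Y,
          if (x ∈ R.1 ∧ y ∈ R.2) ∧ R = ({p.1}, {p.2}) then c p else 0 := by
    refine Finset.sum_congr rfl fun R _ => ?_
    by_cases h : x ∈ R.1 ∧ y ∈ R.2
    · simp only [rcov, diagW, if_pos h]
      refine Finset.sum_congr rfl fun p _ => ?_
      by_cases h2 : R = ({p.1}, {p.2})
      · obtain ⟨hx, hy⟩ := h
        subst h2
        simp only [Finset.mem_singleton] at hx hy
        simp [hx, hy]
      · simp [h2]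
    · simp only [diagW, if_neg h]
      refine (Finset.sum_eq_zero fun p _ => ?_).symm
      simp [h]
  rw [rcov] at h1
  rw [rcov, h1, Finset.sum_comm]
  have h2 : ∀ p : X × Y,
      (∑ R : Finset X × Finset Y, if (x ∈ R.1 ∧ y ∈ R.2) ∧ R = ({p.1}, {p.2}) then c p else 0)
        = if x = p.1 ∧ y = p.2 then c p else 0 := by
    intro p
    rw [Finset.sum_eq_single (({p.1}, {p.2}) : Finset X × Finset Y)]
    · simp [Finset.mem_singleton]
    · intro R _ hR
      simp [hR]
    · intro h
      exact absurd (Finset.mem_univ _) h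
  rw [Finset.sum_congr rfl fun p _ => h2 p]
  rw [Finset.sum_eq_single ((x, y) : X × Y)]
  · simp
  · intro p _ hp
    have : ¬(x = p.1 ∧ y = p.2) := by
      rintro ⟨h1', h2'⟩
      exact hp (Prod.ext_iff.mpr ⟨h1'.symm, h2'.symm⟩)
    simp [this]
  · intro h
    exact absurd (Finset.mem_univ _) h

lemma sum_diagW (c : X × Y → ℝ) :
    ∑ R : Finset X × Finset Y, diagW c R = ∑ p : X × Y, c p := by
  classical
  rw [show (∑ R : Finset X × Finset Y, diagW c R)
      = ∑ p : X × Y, ∑ R : Finset X × Finset Y,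
          if R = ({p.1}, {p.2}) then c p else 0 from Finset.sum_comm]
  refine Finset.sum_congr rfl fun p _ => ?_
  rw [Finset.sum_eq_single (({p.1}, {p.2}) : Finset X × Finset Y)]
  · simp
  · intro R _ hR; simp [hR]
  · intro h; exact absurd (Finset.mem_univ _) h

end AuxSrec

section CoreSrec

open Finset

variable {X Y Z : Type} [Fintype X] [Fintype Y]

/-- The constraints of the distributional LP that do not depend on `μ`. -/
def Kfeas (f : X → Y → Z) (z : Z) (δ : ℝ) (w : Finset X × Finset Y → ℝ) : Prop :=
  (∀ R, 0 ≤ w R) ∧ (∀ x y, f x y ≠ z → rcov w x y ≤ δ) ∧ (∀ x y, rcov w x y ≤ 1)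

lemma core_srecZ [Nonempty X] [Nonempty Y]
    (f : X → Y → Z) (z : Z) (ε δ : ℝ) (hε : ε ∈ Set.Ioo (0:ℝ) 1) (hδ0 : 0 < δ) :
    ∃ μ : X → Y → ℝ, IsDist2 μ ∧ srecZgen f z ε δ ≤ srecZmuGen μ f z ε δ := by
  classical
  obtain ⟨hε0, hε1⟩ := hε
  -- the `z`-feasible weight putting `1-ε` on each singleton rectangle of `f⁻¹(z)`
  set w₀ : Finset X × Finset Y → ℝ :=
    diagW (fun p : X × Y => if f p.1 p.2 = z then 1 - ε else 0) with hw₀def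
  have hw₀cov : ∀ x y, rcov w₀ x y = if f x y = z then 1 - ε else 0 :=
    fun x y => rcov_diagW _ x y
  have hw₀K : Kfeas f z δ w₀ := by
    refine ⟨diagW_nonneg (fun p => by split_ifs <;> linarith) , fun x y hxy => ?_, fun x y => ?_⟩
    · rw [hw₀cov, if_neg hxy]; linarith
    · rw [hw₀cov]; split_ifs <;> linarith
  have hw₀lo : ∀ x y, f x y = z → 1 - ε ≤ rcov w₀ x y := by
    intro x y hxy; rw [hw₀cov, if_pos hxy]
  set v₀ := srecZgen f z ε δ with hv₀
  have hVbdd : BddBelow { v : ℝ | ∃ w : Finset X × Finset Y → ℝ,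
      (∀ R, 0 ≤ w R) ∧
      (∀ x y, f x y = z → 1 - ε ≤ rcov w x y) ∧
      (∀ x y, f x y ≠ z → rcov w x y ≤ δ) ∧
      (∀ x y, rcov w x y ≤ 1) ∧
      v = ∑ R : Finset X × Finset Y, w R } := by
    refine ⟨0, ?_⟩
    rintro v ⟨w, hw1, _, _, _, rfl⟩
    exact Finset.sum_nonneg fun R _ => hw1 R
  have hfeas_le : ∀ w : Finset X × Finset Y → ℝ, Kfeas f z δ w →
      (∀ x y, f x y = z → 1 - ε ≤ rcov w x y) → v₀ ≤ ∑ R : Finset X × Finset Y, w R := by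
    intro w hK hlo
    exact csInf_le hVbdd ⟨w, hK.1, hlo, hK.2.1, hK.2.2, rfl⟩
  -- Separation setup
  set S : Set (ℝ × (X × Y → ℝ)) :=
    {q | ∃ w : Finset X × Finset Y → ℝ, Kfeas f z δ w ∧
      (∑ R : Finset X × Finset Y, w R) ≤ q.1 ∧
      ∀ p : X × Y, f p.1 p.2 = z → q.2 p ≤ rcov w p.1 p.2} with hSdef
  set O : Set (ℝ × (X × Y → ℝ)) :=
    {q | q.1 < v₀ ∧ ∀ p : X × Y, f p.1 p.2 = z → 1 - ε < q.2 p} with hOdef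
  have hOconv : Convex ℝ O := by
    rintro q ⟨hq1, hq2⟩ q' ⟨hq'1, hq'2⟩ a b ha hb hab
    constructor
    · have := (convex_Iio v₀) (Set.mem_Iio.mpr hq1) (Set.mem_Iio.mpr hq'1) ha hb hab
      simpa [smul_eq_mul] using this
    · intro p hp
      have := (convex_Ioi (1 - ε)) (Set.mem_Ioi.mpr (hq2 p hp)) (Set.mem_Ioi.mpr (hq'2 p hp))
        ha hb hab
      simpa [smul_eq_mul] using this
  have hOopen : IsOpen O := by
    have : O = (Prod.fst ⁻¹' Set.Iio v₀) ∩
        ⋂ p : X × Y, {q : ℝ × (X × Y → ℝ) | f p.1 p.2 = z → 1 - ε < q.2 p} := by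
      ext q
      simp only [hOdef, Set.mem_setOf_eq, Set.mem_inter_iff, Set.mem_preimage, Set.mem_Iio,
        Set.mem_iInter]
    rw [this]
    refine (isOpen_Iio.preimage continuous_fst).inter (isOpen_iInter_of_finite fun p => ?_)
    by_cases hp : f p.1 p.2 = z
    · have : {q : ℝ × (X × Y → ℝ) | f p.1 p.2 = z → 1 - ε < q.2 p}
          = (fun q : ℝ × (X × Y → ℝ) => q.2 p) ⁻¹' Set.Ioi (1 - ε) := by
        ext q; simp [hp]
      rw [this]
      exact isOpen_Ioi.preimage ((continuous_apply p).comp continuous_snd)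
    · have : {q : ℝ × (X × Y → ℝ) | f p.1 p.2 = z → 1 - ε < q.2 p} = Set.univ := by
        ext q; simp [hp]
      rw [this]; exact isOpen_univ
  have hSconv : Convex ℝ S := by
    rintro q ⟨w, hwK, hws, hwg⟩ q' ⟨w', hw'K, hw's, hw'g⟩ a b ha hb hab
    refine ⟨fun R => a * w R + b * w' R, ⟨?_, ?_, ?_⟩, ?_, ?_⟩
    · intro R; exact add_nonneg (mul_nonneg ha (hwK.1 R)) (mul_nonneg hb (hw'K.1 R))
    · intro x y hxy
      rw [rcov_combo]
      calc a * rcov w x y + b * rcov w' x y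
          ≤ a * δ + b * δ := add_le_add
            (mul_le_mul_of_nonneg_left (hwK.2.1 x y hxy) ha)
            (mul_le_mul_of_nonneg_left (hw'K.2.1 x y hxy) hb)
        _ = δ := by rw [← add_mul, hab, one_mul]
    · intro x y
      rw [rcov_combo]
      calc a * rcov w x y + b * rcov w' x y
          ≤ a * 1 + b * 1 := add_le_add
            (mul_le_mul_of_nonneg_left (hwK.2.2 x y) ha)
            (mul_le_mul_of_nonneg_left (hw'K.2.2 x y) hb)
        _ = 1 := by rw [← add_mul, hab, one_mul]
    · have h1 : (∑ R : Finset X × Finset Y, (a * w R + b * w' R))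
          = a * (∑ R : Finset X × Finset Y, w R) + b * (∑ R : Finset X × Finset Y, w' R) := by
        rw [Finset.sum_add_distrib, Finset.mul_sum, Finset.mul_sum]
      have h2 : (a • q + b • q').1 = a * q.1 + b * q'.1 := by simp [smul_eq_mul]
      rw [h1, h2]
      exact add_le_add (mul_le_mul_of_nonneg_left hws ha) (mul_le_mul_of_nonneg_left hw's hb)
    · intro p hp
      have h2 : (a • q + b • q').2 p = a * q.2 p + b * q'.2 p := by simp [smul_eq_mul]
      rw [h2, rcov_combo]
      exact add_le_add (mul_le_mul_of_nonneg_left (hwg p hp) ha)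
        (mul_le_mul_of_nonneg_left (hw'g p hp) hb)
  have hdisj : Disjoint O S := by
    rw [Set.disjoint_left]
    rintro q ⟨hq1, hq2⟩ ⟨w, hwK, hws, hwg⟩
    have h1 : v₀ ≤ ∑ R : Finset X × Finset Y, w R :=
      hfeas_le w hwK (fun x y hxy => le_of_lt (lt_of_lt_of_le (hq2 (x, y) hxy) (hwg (x, y) hxy)))
    linarith
  obtain ⟨φ, u, hOlt, hSle⟩ := geometric_hahn_banach_open hOconv hOopen hSconv hdisj
  set c : ℝ := φ (1, 0) with hcdef
  set d : X × Y → ℝ := fun p => φ (0, Pi.single p 1) with hddef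
  set D₁ : ℝ := ∑ p : X × Y, d p with hD₁def
  have phi_eval : ∀ (t : ℝ) (g : X × Y → ℝ), φ (t, g) = c * t + ∑ p : X × Y, d p * g p := by
    intro t g
    have hdecomp : ((t, g) : ℝ × (X × Y → ℝ))
        = t • (((1 : ℝ), (0 : X × Y → ℝ)) : ℝ × (X × Y → ℝ))
          + ∑ p : X × Y, g p • (((0 : ℝ), (Pi.single p (1 : ℝ) : X × Y → ℝ)) : ℝ × (X × Y → ℝ)) := by
      refine Prod.ext_iff.mpr ⟨?_, ?_⟩
      · simp [Prod.fst_sum]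
      · simp only [Prod.snd_add, Prod.smul_snd, Prod.snd_sum, smul_zero, zero_add]
        funext j
        simp only [Finset.sum_apply, Pi.smul_apply, Pi.single_apply, smul_eq_mul, mul_ite,
          mul_one, mul_zero]
        rw [Finset.sum_ite_eq univ j (fun p => g p)]
        simp
    rw [hdecomp, map_add, map_smul, map_sum]
    simp only [smul_eq_mul]
    rw [← hcdef]
    congr 1
    · ring
    · refine Finset.sum_congr rfl fun p _ => ?_
      rw [map_smul]
      simp [hddef, smul_eq_mul, mul_comm]
  have hOmem : ∀ (t : ℝ) (g : X × Y → ℝ), t < v₀ →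
      (∀ p : X × Y, f p.1 p.2 = z → 1 - ε < g p) →
      c * t + ∑ p : X × Y, d p * g p < u := by
    intro t g h1 h2
    have := hOlt (t, g) ⟨h1, h2⟩
    rwa [phi_eval] at this
  have hSmem : ∀ w : Finset X × Finset Y → ℝ, Kfeas f z δ w →
      u ≤ c * (∑ R : Finset X × Finset Y, w R) + ∑ p : X × Y, d p * rcov w p.1 p.2 := by
    intro w hw
    have := hSle ((∑ R : Finset X × Finset Y, w R), fun p : X × Y => rcov w p.1 p.2)
      ⟨w, hw, le_rfl, fun p _ => le_rfl⟩
    rwa [phi_eval] at this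
  -- consequences of separation: signs of the coefficients
  have hone : ∀ t : ℝ, t < v₀ → c * t + D₁ < u := by
    intro t ht
    have := hOmem t (fun _ => 1) ht (fun p _ => by show (1:ℝ) - ε < 1; linarith)
    simpa [hD₁def] using this
  have hcnonneg : 0 ≤ c := by
    by_contra hcn
    push_neg at hcn
    have h1 : min (v₀ - 1) ((u - D₁) / c) < v₀ :=
      lt_of_le_of_lt (min_le_left _ _) (by linarith)
    have h2 := hone _ h1
    have h3 : u - D₁ ≤ c * min (v₀ - 1) ((u - D₁) / c) := by
      have hle : min (v₀ - 1) ((u - D₁) / c) ≤ (u - D₁) / c := min_le_right _ _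
      have := mul_le_mul_of_nonpos_left hle (le_of_lt hcn)
      have heq : c * ((u - D₁) / c) = u - D₁ := by
        rw [mul_comm, div_mul_cancel₀ _ (ne_of_lt hcn)]
      linarith
    linarith
  have hsum_ite : ∀ (p : X × Y) (r : ℝ),
      (∑ q : X × Y, d q * (if q = p then r else 1)) = D₁ + d p * (r - 1) := by
    intro p r
    have h1 : ∀ q : X × Y, d q * (if q = p then r else 1)
        = d q + (if q = p then d p * (r - 1) else 0) := by
      intro q
      by_cases h : q = p
      · subst h; simp; ring
      · simp [h]
    rw [Finset.sum_congr rfl fun q _ => h1 q, Finset.sum_add_distrib,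
      Finset.sum_ite_eq' univ p (fun _ => d p * (r - 1))]
    simp [hD₁def]
  have hd_le : ∀ p : X × Y, f p.1 p.2 = z → d p ≤ 0 := by
    intro p hp
    by_contra hdp
    push_neg at hdp
    set r := max 1 ((u - (c * (v₀ - 1) + D₁)) / d p + 1) with hr
    have hgood : ∀ q : X × Y, f q.1 q.2 = z → 1 - ε < (if q = p then r else 1) := by
      intro q _
      split_ifs
      · exact lt_of_lt_of_le (by linarith) (le_max_left _ _)
      · linarith
    have h2 := hOmem (v₀ - 1) (fun q => if q = p then r else 1) (by linarith) hgood
    rw [hsum_ite p r] at h2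
    have h3 : u - (c * (v₀ - 1) + D₁) ≤ d p * (r - 1) := by
      have h4 : (u - (c * (v₀ - 1) + D₁)) / d p ≤ r - 1 := by
        have := le_max_right 1 ((u - (c * (v₀ - 1) + D₁)) / d p + 1)
        rw [← hr] at this
        linarith
      have h5 := mul_le_mul_of_nonneg_left h4 (le_of_lt hdp)
      have heq : d p * ((u - (c * (v₀ - 1) + D₁)) / d p) = u - (c * (v₀ - 1) + D₁) := by
        rw [mul_comm, div_mul_cancel₀ _ (ne_of_gt hdp)]
      linarith
    linarith
  have hd_zero : ∀ p : X × Y, f p.1 p.2 ≠ z → d p = 0 := by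
    intro p hp
    by_contra hdp
    set r := (u - (c * (v₀ - 1) + D₁)) / d p + 1 with hr
    have hgood : ∀ q : X × Y, f q.1 q.2 = z → 1 - ε < (if q = p then r else 1) := by
      intro q hq
      have hqp : q ≠ p := fun h => hp (h ▸ hq)
      rw [if_neg hqp]
      linarith
    have h2 := hOmem (v₀ - 1) (fun q => if q = p then r else 1) (by linarith) hgood
    rw [hsum_ite p r] at h2
    have heq : d p * (r - 1) = u - (c * (v₀ - 1) + D₁) := by
      rw [hr, add_sub_cancel_right, mul_comm, div_mul_cancel₀ _ hdp]
    linarith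
  have hd_all : ∀ p : X × Y, d p ≤ 0 := by
    intro p
    by_cases h : f p.1 p.2 = z
    · exact hd_le p h
    · exact le_of_eq (hd_zero p h)
  have hD₁le : D₁ ≤ 0 := Finset.sum_nonpos fun p _ => hd_all p
  have hA : c * v₀ + (1 - ε) * D₁ ≤ u := by
    have key : ∀ η : ℝ, 0 < η → (c * v₀ + (1 - ε) * D₁) + η * (D₁ - c) < u := by
      intro η hη
      have heval := hOmem (v₀ - η) (fun _ => 1 - ε + η) (by linarith)
        (fun p _ => by show 1 - ε < 1 - ε + η; linarith)
      have hs : (∑ p : X × Y, d p * (1 - ε + η)) = D₁ * (1 - ε + η) := by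
        rw [← Finset.sum_mul]
      rw [hs] at heval
      have : (c * v₀ + (1 - ε) * D₁) + η * (D₁ - c) = c * (v₀ - η) + D₁ * (1 - ε + η) := by
        ring
      rw [this]
      exact heval
    by_contra hAu
    push_neg at hAu
    set A := c * v₀ + (1 - ε) * D₁ with hAdef
    set B := D₁ - c with hBdef
    have hBpos : (0 : ℝ) < |B| + 1 := by positivity
    set η := (A - u) / (2 * (|B| + 1)) with hηdef
    have hη : 0 < η := div_pos (by linarith) (by linarith)
    have h1 := key η hη
    have h2 : -(η * (|B| + 1)) ≤ η * B := by
      have hB : -(|B| + 1) ≤ B := by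
        have := neg_abs_le B
        linarith
      have := mul_le_mul_of_nonneg_left hB (le_of_lt hη)
      linarith [this]
    have h3 : η * (|B| + 1) = (A - u) / 2 := by
      rw [hηdef]
      field_simp
    linarith
  have hcpos : 0 < c := by
    rcases lt_or_eq_of_le hcnonneg with h | h
    · exact h
    · exfalso
      set wT : Finset X × Finset Y → ℝ :=
        diagW (fun p : X × Y => if d p < 0 then 1 else 0) with hwTdef
      have hTcov : ∀ x y, rcov wT x y = if d (x, y) < 0 then 1 else 0 :=
        fun x y => rcov_diagW _ x y
      have hTK : Kfeas f z δ wT := by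
        refine ⟨diagW_nonneg (fun p => by split_ifs <;> norm_num), fun x y hxy => ?_,
          fun x y => ?_⟩
        · rw [hTcov]
          have h0 : d (x, y) = 0 := hd_zero (x, y) hxy
          rw [h0]
          simp [hδ0.le]
        · rw [hTcov]; split_ifs <;> norm_num
      have h1 := hSmem wT hTK
      have h2 : (∑ p : X × Y, d p * rcov wT p.1 p.2) = D₁ := by
        refine Finset.sum_congr rfl fun p _ => ?_
        have : rcov wT p.1 p.2 = if d p < 0 then 1 else 0 := by
          rw [hTcov]
        rw [this]
        by_cases hdp : d p < 0
        · rw [if_pos hdp, mul_one]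
        · have h0 : d p = 0 := le_antisymm (hd_all p) (not_lt.mp hdp)
          rw [if_neg hdp, h0, zero_mul]
      rw [← h, h2, zero_mul, zero_add] at h1
      have hA' : (1 - ε) * D₁ ≤ u := by
        rw [← h, zero_mul, zero_add] at hA
        exact hA
      have hD₁0 : D₁ = 0 := by nlinarith
      have hdall0 : ∀ p : X × Y, d p = 0 := fun p =>
        (Finset.sum_eq_zero_iff_of_nonpos (fun q _ => hd_all q)).mp hD₁0 p (mem_univ p)
      have h0lt := hone (v₀ - 1) (by linarith)
      rw [← h, hD₁0, zero_mul, zero_add] at h0lt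
      linarith
  -- construction of the hard distribution
  have main : ∃ μ : X → Y → ℝ, IsDist2 μ ∧
      (∀ w : Finset X × Finset Y → ℝ, Kfeas f z δ w →
        ((1 - ε) * (∑ x, ∑ y, if f x y = z then μ x y else 0) ≤
          ∑ x, ∑ y, if f x y = z then μ x y * rcov w x y else 0) →
        v₀ ≤ ∑ R : Finset X × Finset Y, w R) := by
    rcases eq_or_lt_of_le hD₁le with hD | hD
    · -- D₁ = 0 : all d p = 0, take the uniform distribution
      have hdall0 : ∀ p : X × Y, d p = 0 := fun p =>
        (Finset.sum_eq_zero_iff_of_nonpos (fun q _ => hd_all q)).mp hD p (mem_univ p)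
      have hcX : (0 : ℝ) < (Fintype.card X : ℝ) := by
        exact_mod_cast Fintype.card_pos
      have hcY : (0 : ℝ) < (Fintype.card Y : ℝ) := by
        exact_mod_cast Fintype.card_pos
      refine ⟨fun _ _ => ((Fintype.card X : ℝ) * (Fintype.card Y : ℝ))⁻¹, ⟨?_, ?_⟩, ?_⟩
      · intro x y
        positivity
      · simp only [Finset.sum_const, card_univ, nsmul_eq_mul]
        field_simp
      · intro w hw _
        have h1 := hSmem w hw
        have h2 : (∑ p : X × Y, d p * rcov w p.1 p.2) = 0 :=
          Finset.sum_eq_zero fun p _ => by rw [hdall0 p, zero_mul]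
        rw [h2, add_zero] at h1
        rw [hD, mul_zero, add_zero] at hA
        have := le_trans hA h1
        exact le_of_mul_le_mul_left this hcpos
    · -- D₁ < 0 : take μ proportional to -d
      set N : ℝ := -D₁ with hNdef
      have hN : 0 < N := by simp [hNdef]; linarith
      have hμ0 : ∀ p : X × Y, f p.1 p.2 ≠ z → -d p / N = 0 := by
        intro p hp
        rw [hd_zero p hp]
        simp
      have hsumμ : (∑ x, ∑ y, -d (x, y) / N) = 1 := by
        have h1 : (∑ x, ∑ y, -d (x, y) / N) = ∑ p : X × Y, -d p / N :=
          (Fintype.sum_prod_type (f := fun p : X × Y => -d p / N)).symm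
        have h2 : (∑ p : X × Y, -d p) = N := by
          rw [Finset.sum_neg_distrib, ← hD₁def, ← hNdef]
        rw [h1, ← Finset.sum_div, h2]
        exact div_self hN.ne'
      refine ⟨fun x y => -d (x, y) / N, ⟨?_, hsumμ⟩, ?_⟩
      · intro x y
        exact div_nonneg (neg_nonneg.mpr (hd_all (x, y))) hN.le
      · intro w hw havg
        -- rewrite the two sums
        have hL : (∑ x, ∑ y, if f x y = z then -d (x, y) / N else 0)
            = ∑ x, ∑ y, -d (x, y) / N := by
          refine Finset.sum_congr rfl fun x _ => Finset.sum_congr rfl fun y _ => ?_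
          by_cases hxy : f x y = z
          · rw [if_pos hxy]
          · rw [if_neg hxy, hμ0 (x, y) hxy]
        have hR : (∑ x, ∑ y, if f x y = z then (-d (x, y) / N) * rcov w x y else 0)
            = (∑ p : X × Y, -d p * rcov w p.1 p.2) / N := by
          have h1 : (∑ p : X × Y, -d p * rcov w p.1 p.2) / N
              = ∑ x, ∑ y, -d (x, y) * rcov w x y / N := by
            rw [Finset.sum_div]
            exact Fintype.sum_prod_type (f := fun p : X × Y => -d p * rcov w p.1 p.2 / N)
          rw [h1]
          refine Finset.sum_congr rfl fun x _ => Finset.sum_congr rfl fun y _ => ?_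
          by_cases hxy : f x y = z
          · rw [if_pos hxy]; ring
          · rw [if_neg hxy, hd_zero (x, y) hxy]; simp
        beta_reduce at havg
        rw [hL, hsumμ, mul_one, hR] at havg
        have h6 : (1 - ε) * N ≤ ∑ p : X × Y, -d p * rcov w p.1 p.2 := by
          rw [le_div_iff₀ hN] at havg
          linarith
        have h7 : (∑ p : X × Y, -d p * rcov w p.1 p.2)
            = -(∑ p : X × Y, d p * rcov w p.1 p.2) := by
          rw [← Finset.sum_neg_distrib]
          exact Finset.sum_congr rfl fun p _ => by ring
        have h8 : (∑ p : X × Y, d p * rcov w p.1 p.2) ≤ (1 - ε) * D₁ := by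
          rw [h7] at h6
          have : N = -D₁ := hNdef
          nlinarith
        have h9 := hSmem w hw
        have h10 : c * v₀ ≤ c * (∑ R : Finset X × Finset Y, w R) := by linarith
        exact le_of_mul_le_mul_left h10 hcpos
  obtain ⟨μ, hμdist, hkey⟩ := main
  refine ⟨μ, hμdist, ?_⟩
  rw [srecZmuGen]
  apply le_csInf
  · refine ⟨∑ R : Finset X × Finset Y, w₀ R, w₀, hw₀K.1, ?_, hw₀K.2.1, hw₀K.2.2, rfl⟩
    refine le_of_eq ?_
    rw [Finset.mul_sum]
    refine Finset.sum_congr rfl fun x _ => ?_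
    rw [Finset.mul_sum]
    refine Finset.sum_congr rfl fun y _ => ?_
    by_cases hxy : f x y = z
    · rw [if_pos hxy, if_pos hxy, hw₀cov, if_pos hxy]
      ring
    · rw [if_neg hxy, if_neg hxy, mul_zero]
  · rintro v ⟨w, hw1, hw2, hw3, hw4, rfl⟩
    exact hkey w ⟨hw1, hw3, hw4⟩ hw2

end CoreSrec

section FinalSrec

variable {X Y Z : Type} [Fintype X] [Fintype Y]

lemma exists_feasible_srecZ (f : X → Y → Z) (z : Z) {ε δ : ℝ}
    (hε0 : 0 < ε) (hε1 : ε < 1) (hδ0 : 0 < δ) :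
    ∃ w : Finset X × Finset Y → ℝ, (∀ R, 0 ≤ w R) ∧
      (∀ x y, f x y = z → 1 - ε ≤ rcov w x y) ∧
      (∀ x y, f x y ≠ z → rcov w x y ≤ δ) ∧
      (∀ x y, rcov w x y ≤ 1) := by
  classical
  refine ⟨diagW (fun p : X × Y => if f p.1 p.2 = z then 1 - ε else 0),
    diagW_nonneg (fun p => by split_ifs <;> linarith), fun x y hxy => ?_, fun x y hxy => ?_,
    fun x y => ?_⟩
  · rw [rcov_diagW, if_pos hxy]
  · rw [rcov_diagW, if_neg hxy]; linarith
  · rw [rcov_diagW]; split_ifs <;> linarith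

end FinalSrec


/-- **Proposition 2.1 (minmax for the smooth rectangle bound).** For every
`f : X × Y → Z` and `ε, δ ∈ (0,1)`, `srec_{ε,δ}(f) = max_μ srec^μ_{ε,δ}(f)`, the maximum
being over all probability distributions `μ` on `X × Y` (i.e. `srec_{ε,δ}(f)` is the
greatest element of the set of values `srec^μ_{ε,δ}(f)`). -/
theorem srec_eq_max_srecMu {X Y Z : Type} [Fintype X] [Fintype Y] [Fintype Z]
    [Nonempty X] [Nonempty Y] [Nonempty Z]
    (f : X → Y → Z) (ε δ : ℝ) (hε : ε ∈ Set.Ioo (0 : ℝ) 1) (hδ : δ ∈ Set.Ioo (0 : ℝ) 1) :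
    IsGreatest { v : ℝ | ∃ μ : X → Y → ℝ, IsDist2 μ ∧ v = srecMuGen μ f ε δ }
      (srecGen f ε δ) := by
  classical
  have hε0 : 0 < ε := hε.1
  have hε1 : ε < 1 := hε.2
  have hδ0 : 0 < δ := hδ.1
  have hbddZ : BddAbove (Set.range fun z : Z => srecZgen f z ε δ) :=
    (Set.finite_range _).bddAbove
  have hupper : ∀ μ : X → Y → ℝ, IsDist2 μ → srecMuGen μ f ε δ ≤ srecGen f ε δ := by
    intro μ hμ
    rw [srecMuGen]
    refine csSup_le (Set.range_nonempty _) ?_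
    rintro v ⟨z, rfl⟩
    have h1 : srecZmuGen μ f z ε δ ≤ srecZgen f z ε δ := by
      rw [srecZmuGen, srecZgen]
      apply csInf_le_csInf
      · refine ⟨0, ?_⟩
        rintro v ⟨w, hw1, _, _, _, rfl⟩
        exact Finset.sum_nonneg fun R _ => hw1 R
      · obtain ⟨w, hw1, hw2, hw3, hw4⟩ := exists_feasible_srecZ f z hε0 hε1 hδ0
        exact ⟨_, w, hw1, hw2, hw3, hw4, rfl⟩
      · rintro v ⟨w, hw1, hw2, hw3, hw4, rfl⟩
        refine ⟨w, hw1, ?_, hw3, hw4, rfl⟩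
        rw [Finset.mul_sum]
        refine Finset.sum_le_sum fun x _ => ?_
        rw [Finset.mul_sum]
        refine Finset.sum_le_sum fun y _ => ?_
        by_cases hxy : f x y = z
        · rw [if_pos hxy, if_pos hxy]
          calc (1 - ε) * μ x y = μ x y * (1 - ε) := mul_comm _ _
            _ ≤ μ x y * rcov w x y :=
              mul_le_mul_of_nonneg_left (hw2 x y hxy) (hμ.1 x y)
        · rw [if_neg hxy, if_neg hxy, mul_zero]
    exact le_trans h1 (le_csSup hbddZ ⟨z, rfl⟩)
  have hmem : sSup (Set.range fun z : Z => srecZgen f z ε δ)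
      ∈ Set.range fun z : Z => srecZgen f z ε δ :=
    (Set.range_nonempty _).csSup_mem (Set.finite_range _)
  obtain ⟨z₀, hz₀⟩ := hmem
  obtain ⟨μ, hμdist, hμle⟩ := core_srecZ f z₀ ε δ hε hδ0
  have heq : srecGen f ε δ = srecMuGen μ f ε δ := by
    refine le_antisymm ?_ (hupper μ hμdist)
    calc srecGen f ε δ = srecZgen f z₀ ε δ := by rw [srecGen, ← hz₀]
      _ ≤ srecZmuGen μ f z₀ ε δ := hμle
      _ ≤ srecMuGen μ f ε δ := by
          rw [srecMuGen]
          exact le_csSup ((Set.finite_range _).bddAbove) ⟨z₀, rfl⟩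
  constructor
  · exact ⟨μ, hμdist, heq⟩
  · rintro v ⟨μ', hμ', rfl⟩
    exact hupper μ' hμ'
end

section
/- Let f : X × Y → {0,1} on finite sets X, Y, let μ be a product distribution on X × Y, and let ε, δ ∈ (0,1) and D > 0. If srec^{0,μ}_{ε,δ}(f) ≤ D, then for every ρ ∈ (0,1) there exists a combinatorial rectangle S ⊆ X × Y such that μ_1(S) ≤ ρ·μ_0(S) and μ(S) ≥ μ_0(S) ≥ (1/D)·((1−ε)·μ_0 − (δ/ρ)·μ_1). -/
open scoped BigOperators
open scoped Classical

/-!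
For any feasible solution `w` of the LP defining `srec^{0,μ}_{ε,δ}(f)`, put
`g(R) = μ₀(R) - μ₁(R)/ρ`. The LP constraints give `∑_R w_R g(R) ≥ (1-ε)μ₀ - (δ/ρ)μ₁`.
A rectangle with `g(R) ≥ 0` is biased, so `g(R) ≤ M` for every `R`, where `M` is the largest
`μ₀`-mass of a biased rectangle. Hence `(1-ε)μ₀ - (δ/ρ)μ₁ ≤ M · ∑_R w_R`, and taking the
infimum over `w` replaces `∑_R w_R` by `srec^{0,μ}_{ε,δ}(f) ≤ D`.
-/

section SmoothRectangleBound

variable {X Y : Type} [Fintype X] [Fintype Y]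

theorem rMassZ_nonneg {μ : X → Y → ℝ} (hμ : ∀ x y, 0 ≤ μ x y) (f : X → Y → Bool) (z : Bool)
    (R : Finset X × Finset Y) : 0 ≤ rMassZ μ f z R :=
  Finset.sum_nonneg fun x _ => Finset.sum_nonneg fun y _ => by split_ifs <;> simp [hμ]

theorem rMassZ_le_rMass {μ : X → Y → ℝ} (hμ : ∀ x y, 0 ≤ μ x y) (f : X → Y → Bool) (z : Bool)
    (R : Finset X × Finset Y) : rMassZ μ f z R ≤ rMass μ R :=
  Finset.sum_le_sum fun x _ => Finset.sum_le_sum fun y _ => by split_ifs <;> simp_all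

def SrecZmuFeasible (μ : X → Y → ℝ) (f : X → Y → Bool) (z : Bool) (ε δ : ℝ)
    (w : Finset X × Finset Y → ℝ) : Prop :=
  (∀ R, 0 ≤ w R) ∧
  ((1 - ε) * totalZ μ f z ≤ ∑ x, ∑ y, if f x y = z then μ x y * rcov w x y else 0) ∧
  (∀ x y, f x y ≠ z → rcov w x y ≤ δ) ∧
  (∀ x y, rcov w x y ≤ 1)

theorem srecZmu_eq_sInf_image (μ : X → Y → ℝ) (f : X → Y → Bool) (z : Bool) (ε δ : ℝ) :
    srecZmu μ f z ε δ =
      sInf ((fun w => ∑ R, w R) '' {w | SrecZmuFeasible μ f z ε δ w}) := by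
  simp only [srecZmu, SrecZmuFeasible, Set.image, Set.mem_ofPred_eq, and_assoc, eq_comm]

noncomputable def singletonCover (f : X → Y → Bool) (z : Bool) (R : Finset X × Finset Y) : ℝ :=
  if ∃ x y, f x y = z ∧ R = ({x}, {y}) then 1 else 0

theorem rcov_singletonCover (f : X → Y → Bool) (z : Bool) (x : X) (y : Y) :
    rcov (singletonCover f z) x y = if f x y = z then 1 else 0 := by
  rw [rcov, Finset.sum_eq_single ({x}, {y})]
  · simp [singletonCover]
  · rintro R - hR
    simp only [singletonCover]
    split_ifs with h1 h2 <;> try rfl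
    obtain ⟨a, b, -, rfl⟩ := h2
    simp_all
  · simp

theorem sum_mul_rMassZ (μ : X → Y → ℝ) (f : X → Y → Bool) (z : Bool)
    (w : Finset X × Finset Y → ℝ) :
    ∑ R, w R * rMassZ μ f z R = ∑ x, ∑ y, if f x y = z then μ x y * rcov w x y else 0 := by
  simp only [rMassZ, rcov, Finset.mul_sum]
  rw [Finset.sum_comm]
  refine Finset.sum_congr rfl fun x _ => ?_
  rw [Finset.sum_comm]
  refine Finset.sum_congr rfl fun y _ => ?_
  split_ifs with h <;> simp [h, mul_comm]

theorem singletonCover_feasible {μ : X → Y → ℝ} (hμ : ∀ x y, 0 ≤ μ x y) (f : X → Y → Bool)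
    (z : Bool) {ε δ : ℝ} (hε : 0 ≤ ε) (hδ : 0 ≤ δ) :
    SrecZmuFeasible μ f z ε δ (singletonCover f z) := by
  refine ⟨fun R => ?_, ?_, fun x y hf => ?_, fun x y => ?_⟩
  · unfold singletonCover
    split_ifs <;> norm_num
  · have hcov : (∑ x, ∑ y, if f x y = z then μ x y * rcov (singletonCover f z) x y else 0) =
        totalZ μ f z := by
      simp +contextual [rcov_singletonCover, totalZ]
    have htot : 0 ≤ totalZ μ f z :=
      Finset.sum_nonneg fun x _ => Finset.sum_nonneg fun y _ => by split_ifs <;> simp [hμ]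
    rw [hcov]
    linarith [mul_nonneg hε htot]
  · simp [rcov_singletonCover, hf, hδ]
  · rw [rcov_singletonCover]
    split_ifs <;> norm_num

theorem SrecZmuFeasible.le_sum_mul {μ : X → Y → ℝ} (hμ : ∀ x y, 0 ≤ μ x y)
    {f : X → Y → Bool} {z : Bool} {ε δ ρ : ℝ} (hρ : 0 ≤ ρ) {w : Finset X × Finset Y → ℝ}
    (hw : SrecZmuFeasible μ f z ε δ w) :
    (1 - ε) * totalZ μ f z - δ / ρ * totalZ μ f (!z) ≤
      ∑ R, w R * (rMassZ μ f z R - rMassZ μ f (!z) R / ρ) := by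
  have hcovered : (1 - ε) * totalZ μ f z ≤ ∑ R, w R * rMassZ μ f z R :=
    (sum_mul_rMassZ μ f z w).symm ▸ hw.2.1
  have hleak : ∑ R, w R * rMassZ μ f (!z) R ≤ δ * totalZ μ f (!z) := by
    rw [sum_mul_rMassZ, totalZ, Finset.mul_sum]
    refine Finset.sum_le_sum fun x _ => ?_
    rw [Finset.mul_sum]
    refine Finset.sum_le_sum fun y _ => ?_
    split_ifs with h
    · have hne : f x y ≠ z := by simp [h]
      rw [mul_comm δ]
      exact mul_le_mul_of_nonneg_left (hw.2.2.1 x y hne) (hμ x y)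
    · simp
  have hsplit : ∑ R, w R * (rMassZ μ f z R - rMassZ μ f (!z) R / ρ) =
      ∑ R, w R * rMassZ μ f z R - (∑ R, w R * rMassZ μ f (!z) R) / ρ := by
    simp only [mul_sub, Finset.sum_sub_distrib, Finset.sum_div, mul_div_assoc]
  rw [hsplit, div_mul_eq_mul_div]
  gcongr

theorem exists_biased_forall_sub_div_le {μ : X → Y → ℝ} (hμ : ∀ x y, 0 ≤ μ x y)
    (f : X → Y → Bool) (z : Bool) {ρ : ℝ} (hρ : 0 < ρ) :
    ∃ S, rMassZ μ f (!z) S ≤ ρ * rMassZ μ f z S ∧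
      ∀ R, rMassZ μ f z R - rMassZ μ f (!z) R / ρ ≤ rMassZ μ f z S := by
  have hempty : ∀ z', rMassZ μ f z' (∅, ∅) = 0 := fun z' => by simp [rMassZ]
  obtain ⟨S, hS, hSmax⟩ := Finset.exists_max_image
    (Finset.univ.filter fun S => rMassZ μ f (!z) S ≤ ρ * rMassZ μ f z S) (rMassZ μ f z)
    ⟨(∅, ∅), by simp [hempty]⟩
  refine ⟨S, (Finset.mem_filter.mp hS).2, fun R => ?_⟩
  have hR : 0 ≤ rMassZ μ f (!z) R / ρ := div_nonneg (rMassZ_nonneg hμ f _ R) hρ.le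
  by_cases hbiased : rMassZ μ f (!z) R ≤ ρ * rMassZ μ f z R
  · have := hSmax R (by simp [hbiased])
    linarith
  · have : rMassZ μ f z R < rMassZ μ f (!z) R / ρ := by
      rw [lt_div_iff₀ hρ]
      linarith
    linarith [rMassZ_nonneg hμ f z S]

theorem le_mul_srecZmu {μ : X → Y → ℝ} (hμ : ∀ x y, 0 ≤ μ x y) (f : X → Y → Bool)
    (z : Bool) {ε δ ρ m : ℝ} (hε : 0 ≤ ε) (hδ : 0 ≤ δ) (hρ : 0 ≤ ρ)
    (hm : ∀ R, rMassZ μ f z R - rMassZ μ f (!z) R / ρ ≤ m) :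
    (1 - ε) * totalZ μ f z - δ / ρ * totalZ μ f (!z) ≤ m * srecZmu μ f z ε δ := by
  have hm0 : 0 ≤ m := by simpa [rMassZ] using hm (∅, ∅)
  rw [srecZmu_eq_sInf_image, ← smul_eq_mul m, ← Real.sInf_smul_of_nonneg hm0]
  have hfeasible : ((fun w => ∑ R, w R) '' {w | SrecZmuFeasible μ f z ε δ w}).Nonempty :=
    ⟨_, singletonCover f z, singletonCover_feasible hμ f z hε hδ, rfl⟩
  refine le_csInf hfeasible.smul_set ?_
  rintro _ ⟨_, ⟨w, hw, rfl⟩, rfl⟩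
  calc _ ≤ ∑ R, w R * (rMassZ μ f z R - rMassZ μ f (!z) R / ρ) := hw.le_sum_mul hμ hρ
    _ ≤ ∑ R, w R * m := Finset.sum_le_sum fun R _ => mul_le_mul_of_nonneg_left (hm R) (hw.1 R)
    _ = m • ∑ R, w R := by rw [smul_eq_mul, Finset.mul_sum]; simp only [mul_comm]

end SmoothRectangleBound

/-- **Lemma 2.4 (large biased rectangle).** If `μ` is a product distribution and
`srec^{0,μ}_{ε,δ}(f) ≤ D`, then for every `ρ ∈ (0,1)` there is a rectangle `S` that is
`(1-ρ)`-biased towards `0` (i.e. `μ₁(S) ≤ ρ·μ₀(S)`) with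
`μ(S) ≥ μ₀(S) ≥ (1/D)·((1-ε)·μ₀ - (δ/ρ)·μ₁)`. -/
theorem exists_large_biased_rectangle {X Y : Type} [Fintype X] [Fintype Y]
    (f : X → Y → Bool) (μA : X → ℝ) (μB : Y → ℝ) (hA : IsDist μA) (hB : IsDist μB)
    (μ : X → Y → ℝ) (hμ : ∀ x y, μ x y = μA x * μB y)
    (ε δ D : ℝ) (hε : ε ∈ Set.Ioo (0 : ℝ) 1) (hδ : δ ∈ Set.Ioo (0 : ℝ) 1) (hD : 0 < D)
    (hsrec : srecZmu μ f false ε δ ≤ D) :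
    ∀ ρ ∈ Set.Ioo (0 : ℝ) 1, ∃ S : Finset X × Finset Y,
      rMassZ μ f true S ≤ ρ * rMassZ μ f false S ∧
      rMassZ μ f false S ≤ rMass μ S ∧
      (1 / D) * ((1 - ε) * totalZ μ f false - (δ / ρ) * totalZ μ f true) ≤
        rMassZ μ f false S := by
  rintro ρ ⟨hρ, -⟩
  have hμ0 : ∀ x y, 0 ≤ μ x y := fun x y => hμ x y ▸ mul_nonneg (hA.1 x) (hB.1 y)
  obtain ⟨S, hbiased, hmax⟩ := exists_biased_forall_sub_div_le hμ0 f false hρ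
  refine ⟨S, hbiased, rMassZ_le_rMass hμ0 f false S, ?_⟩
  rw [one_div_mul_eq_div, div_le_iff₀ hD]
  calc _ ≤ rMassZ μ f false S * srecZmu μ f false ε δ :=
        le_mul_srecZmu hμ0 f false hε.1.le hδ.1.le hρ.le hmax
    _ ≤ _ := mul_le_mul_of_nonneg_left hsrec (rMassZ_nonneg hμ0 f false S)
end
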